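/- arXiv:2110.13821 — 5 statements merged into one kernel-verified Lean document; each statement's English description precedes it below -/
import Mathlib

section
/- Let X be a real Banach space with norm ‖·‖ and let T ∈ Lip₀(X,X). Then the mapping p ↦ ν_L^p(T) from (E(X), μ) to ℝ is uniformly continuous on every bounded subset of E(X); that is, for every κ > 0 and every ε > 0 there exists δ > 0 such that |ν_L^p(T) − ν_L^q(T)| < ε whenever p, q ∈ E(X) satisfy μ(p, ‖·‖) < κ, μ(q, ‖·‖) < κ and μ(p, q) < δ. -/
noncomputable section

/-- `T ∈ Lip₀(X,Y)`: Lipschitz and vanishing at 0. -/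
def IsLip0 {X Y : Type*} [NormedAddCommGroup X] [NormedAddCommGroup Y] (T : X → Y) : Prop :=
  (∃ K, LipschitzWith K T) ∧ T 0 = 0

/-- The set `E(X)` of (semi)norms on `X` which are genuine norms equivalent to the
given norm of `X`. -/
def eqNorms (X : Type*) [NormedAddCommGroup X] [NormedSpace ℝ X] : Set (Seminorm ℝ X) :=
  {p | (∀ x : X, p x = 0 → x = 0) ∧ ∃ k : ℝ, 1 ≤ k ∧ ∀ x : X, p x ≤ k * ‖x‖ ∧ ‖x‖ ≤ k * p x}

/-- The metric `μ(p,q) = log (min {k ≥ 1 : p ≤ k q, q ≤ k p})` on equivalent norms. -/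
def normDist {X : Type*} [NormedAddCommGroup X] [NormedSpace ℝ X] (p q : Seminorm ℝ X) : ℝ :=
  Real.log (sInf {k : ℝ | 1 ≤ k ∧ ∀ x : X, p x ≤ k * q x ∧ q x ≤ k * p x})

/-- The dual norm of a continuous linear functional with respect to the norm `p`. -/
def dualNormP {X : Type*} [NormedAddCommGroup X] [NormedSpace ℝ X] (p : Seminorm ℝ X)
    (f : X →L[ℝ] ℝ) : ℝ :=
  sSup {r : ℝ | ∃ z : X, p z ≤ 1 ∧ r = |f z|}

/-- The Lipschitz numerical radius of `T` with respect to the norm `p`, i.e. the supremum of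
`|x*(Tx - Ty)| / p(x-y)²` over the state `Π_p` of triples `(x, y, x*)` with `x ≠ y` and
`x*(x-y) = p(x*) p(x-y) = p(x-y)²`. -/
def nuLP {X : Type*} [NormedAddCommGroup X] [NormedSpace ℝ X] (p : Seminorm ℝ X)
    (T : X → X) : ℝ :=
  sSup {r : ℝ | ∃ (x y : X) (f : X →L[ℝ] ℝ), x ≠ y ∧
    f (x - y) = (p (x - y)) ^ 2 ∧ dualNormP p f * p (x - y) = (p (x - y)) ^ 2 ∧
    r = |f (T x - T y)| / (p (x - y)) ^ 2}

/-!
Fix a `p`-state `(x, y, f)`, put `v = T x - T y` and move `x` to `x' = x ± t v`, the sign chosen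
so that `f` grows: `f (x' - y) = p (x - y)² + t |f v|`. A `q`-norming functional at `x' - y` makes
`(x', y, g)` a `q`-state, and since `T x' - T y` differs from `v` by at most `t L q v`, this gives
`q (x' - y) ≤ q (x - y) + t ν_q q (x' - y) + t² L q v`. Comparing the two through `p ≤ D q ≤ D² p`
yields `ν_p ≤ (D² - 1) / t + D² (1 + t L) ν_q + D² t L²` for every `t > 0`, where `L` bounds the
Lipschitz constants of `T` for all norms at distance `< κ` from `‖·‖`. Choosing `t` small and then
`D` close to `1` gives a modulus of continuity depending only on `κ`.
-/

open Real

section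

variable {X : Type*} [NormedAddCommGroup X] [NormedSpace ℝ X] {p q : Seminorm ℝ X}

lemma pos_of_mem_eqNorms (hp : p ∈ eqNorms X) {x : X} (hx : x ≠ 0) : 0 < p x :=
  (apply_nonneg p x).lt_of_ne' (mt (hp.1 x) hx)

lemma normSeminorm_mem_eqNorms : normSeminorm ℝ X ∈ eqNorms X :=
  ⟨fun x hx => by simpa using hx, 1, le_rfl, fun x => by simp⟩

lemma le_exp_mul_of_normDist_lt (hp : p ∈ eqNorms X) (hq : q ∈ eqNorms X) {δ : ℝ}
    (h : normDist p q < δ) (x : X) : p x ≤ exp δ * q x ∧ q x ≤ exp δ * p x := by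
  obtain ⟨k₁, hk₁, H₁⟩ := hp.2
  obtain ⟨k₂, hk₂, H₂⟩ := hq.2
  have hne : {k : ℝ | 1 ≤ k ∧ ∀ x : X, p x ≤ k * q x ∧ q x ≤ k * p x}.Nonempty := by
    refine ⟨k₁ * k₂, one_le_mul_of_one_le_of_one_le hk₁ hk₂, fun x => ⟨?_, ?_⟩⟩
    · calc p x ≤ k₁ * ‖x‖ := (H₁ x).1
        _ ≤ k₁ * (k₂ * q x) := by gcongr; exact (H₂ x).2
        _ = k₁ * k₂ * q x := by ring
    · calc q x ≤ k₂ * ‖x‖ := (H₂ x).1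
        _ ≤ k₂ * (k₁ * p x) := by gcongr; exact (H₁ x).2
        _ = k₁ * k₂ * p x := by ring
  have hpos : 0 < sInf {k : ℝ | 1 ≤ k ∧ ∀ x : X, p x ≤ k * q x ∧ q x ≤ k * p x} :=
    zero_lt_one.trans_le (le_csInf hne fun k hk => hk.1)
  obtain ⟨k, ⟨-, hk⟩, hkδ⟩ := exists_lt_of_csInf_lt hne ((log_lt_iff_lt_exp hpos).1 h)
  exact ⟨(hk x).1.trans (by gcongr), (hk x).2.trans (by gcongr)⟩

lemma seminorm_map_sub_le_of_le_mul {M K : ℝ} (hM : 0 ≤ M) (hK : 0 ≤ K)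
    (hpq : ∀ x, p x ≤ M * q x ∧ q x ≤ M * p x) {T : X → X}
    (hT : ∀ a b, q (T a - T b) ≤ K * q (a - b)) (a b : X) :
    p (T a - T b) ≤ M * K * M * p (a - b) :=
  calc p (T a - T b) ≤ M * q (T a - T b) := (hpq _).1
    _ ≤ M * (K * q (a - b)) := by gcongr; exact hT a b
    _ ≤ M * (K * (M * p (a - b))) := by gcongr; exact (hpq _).2
    _ = M * K * M * p (a - b) := by ring

lemma bddAbove_dualNormP_set (hp : p ∈ eqNorms X) (f : X →L[ℝ] ℝ) :
    BddAbove {r : ℝ | ∃ z : X, p z ≤ 1 ∧ r = |f z|} := by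
  obtain ⟨k, hk1, hk⟩ := hp.2
  refine ⟨‖f‖ * k, ?_⟩
  rintro _ ⟨z, hz, rfl⟩
  calc |f z| ≤ ‖f‖ * ‖z‖ := f.le_opNorm z
    _ ≤ ‖f‖ * (k * 1) := by gcongr; exact (hk z).2.trans (by gcongr)
    _ = ‖f‖ * k := by ring

lemma abs_apply_le_dualNormP_mul (hp : p ∈ eqNorms X) (f : X →L[ℝ] ℝ) (z : X) :
    |f z| ≤ dualNormP p f * p z := by
  rcases eq_or_ne z 0 with rfl | hz
  · simp
  have hpz := pos_of_mem_eqNorms hp hz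
  have hmem : |f ((p z)⁻¹ • z)| ∈ {r : ℝ | ∃ w : X, p w ≤ 1 ∧ r = |f w|} :=
    ⟨_, by rw [map_smul_eq_mul, norm_inv, Real.norm_of_nonneg hpz.le, inv_mul_cancel₀ hpz.ne'],
      rfl⟩
  have hle := le_csSup (bddAbove_dualNormP_set hp f) hmem
  rw [map_smul, smul_eq_mul, abs_mul, abs_inv, abs_of_pos hpz, inv_mul_le_iff₀ hpz] at hle
  exact hle.trans_eq (mul_comm _ _)

lemma dualNormP_le {f : X →L[ℝ] ℝ} {c : ℝ} (hc : 0 ≤ c) (h : ∀ z, |f z| ≤ c * p z) :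
    dualNormP p f ≤ c :=
  Real.sSup_le (fun _ ⟨z, hz, hr⟩ => hr ▸ (h z).trans (mul_le_of_le_one_right hc hz)) hc

lemma abs_apply_le_of_dualNormP_mul_eq (hp : p ∈ eqNorms X) {u : X} (hu : u ≠ 0)
    {f : X →L[ℝ] ℝ} (hf : dualNormP p f * p u = p u ^ 2) (z : X) : |f z| ≤ p u * p z := by
  have hpu := pos_of_mem_eqNorms hp hu
  have : dualNormP p f = p u := mul_right_cancel₀ hpu.ne' (by rw [hf, sq])
  exact this ▸ abs_apply_le_dualNormP_mul hp f z

lemma exists_dualNormP_mul_eq (hp : p ∈ eqNorms X) (u : X) :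
    ∃ f : X →L[ℝ] ℝ, f u = p u ^ 2 ∧ dualNormP p f * p u = p u ^ 2 := by
  rcases eq_or_ne u 0 with rfl | hu
  · exact ⟨0, by simp, by simp⟩
  have hpu := pos_of_mem_eqNorms hp hu
  obtain ⟨g, hgu, hg⟩ := Module.Dual.exists_extension_of_le_seminorm_real (p := p)
    (ℝ ∙ u) (p u • (LinearEquiv.coord ℝ X u hu).toLinearMap) fun y => by
      conv_rhs => rw [← LinearEquiv.coord_apply_smul ℝ X u hu y]
      rw [map_smul_eq_mul, Real.norm_eq_abs, mul_comm, LinearMap.smul_apply, smul_eq_mul]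
      exact mul_le_mul_of_nonneg_left (le_abs_self _) hpu.le
  replace hgu : g u = p u := by
    simpa [LinearEquiv.coord_self] using hgu ⟨u, Submodule.mem_span_singleton_self u⟩
  obtain ⟨k, -, hk⟩ := hp.2
  let f : X →L[ℝ] ℝ := p u • g.mkContinuous k fun z => (hg z).trans (hk z).1
  have hfz : ∀ z, |f z| ≤ p u * p z := fun z => by
    simpa [f, abs_mul, abs_of_pos hpu] using mul_le_mul_of_nonneg_left (hg z) hpu.le
  have hfu : f u = p u ^ 2 := by simp [f, hgu, sq]
  refine ⟨f, hfu, ?_⟩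
  have hdual : p u ≤ dualNormP p f := by
    have := abs_apply_le_dualNormP_mul hp f u
    rw [hfu, abs_of_nonneg (sq_nonneg _), sq] at this
    exact le_of_mul_le_mul_right this hpu
  rw [le_antisymm (dualNormP_le hpu.le hfz) hdual, sq]

variable {T : X → X} {L : ℝ}

lemma div_sq_le_of_lipschitz (hp : p ∈ eqNorms X) (hT : ∀ a b, p (T a - T b) ≤ L * p (a - b))
    {x y : X} (hxy : x ≠ y) {f : X →L[ℝ] ℝ} (hf : dualNormP p f * p (x - y) = p (x - y) ^ 2) :
    |f (T x - T y)| / p (x - y) ^ 2 ≤ L := by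
  have hu := sub_ne_zero.2 hxy
  rw [div_le_iff₀ (by positivity [pos_of_mem_eqNorms hp hu])]
  calc |f (T x - T y)| ≤ p (x - y) * p (T x - T y) :=
        abs_apply_le_of_dualNormP_mul_eq hp hu hf _
    _ ≤ p (x - y) * (L * p (x - y)) := by gcongr; exact hT x y
    _ = L * p (x - y) ^ 2 := by ring

lemma nuLP_nonneg (p : Seminorm ℝ X) (T : X → X) : 0 ≤ nuLP p T :=
  Real.sSup_nonneg fun _ ⟨_, _, _, _, _, _, hr⟩ => hr ▸ by positivity

lemma nuLP_le (hp : p ∈ eqNorms X) (hL : 0 ≤ L) (hT : ∀ a b, p (T a - T b) ≤ L * p (a - b)) :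
    nuLP p T ≤ L :=
  Real.sSup_le (fun _ ⟨_, _, _, hxy, _, hf, hr⟩ => hr ▸ div_sq_le_of_lipschitz hp hT hxy hf) hL

lemma abs_apply_le_nuLP_mul (hp : p ∈ eqNorms X) (hT : ∀ a b, p (T a - T b) ≤ L * p (a - b))
    {x y : X} (hxy : x ≠ y) {f : X →L[ℝ] ℝ} (hf₁ : f (x - y) = p (x - y) ^ 2)
    (hf₂ : dualNormP p f * p (x - y) = p (x - y) ^ 2) :
    |f (T x - T y)| ≤ nuLP p T * p (x - y) ^ 2 := by
  have hbdd : BddAbove {r : ℝ | ∃ (x y : X) (f : X →L[ℝ] ℝ), x ≠ y ∧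
      f (x - y) = (p (x - y)) ^ 2 ∧ dualNormP p f * p (x - y) = (p (x - y)) ^ 2 ∧
      r = |f (T x - T y)| / (p (x - y)) ^ 2} :=
    ⟨L, fun _ ⟨_, _, _, hxy, _, hf, hr⟩ => hr ▸ div_sq_le_of_lipschitz hp hT hxy hf⟩
  rw [← div_le_iff₀ (by positivity [pos_of_mem_eqNorms hp (sub_ne_zero.2 hxy)])]
  exact le_csSup hbdd ⟨x, y, f, hxy, hf₁, hf₂, rfl⟩

lemma seminorm_add_smul_sub_le (hq : q ∈ eqNorms X) (hL : 0 ≤ L)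
    (hT : ∀ a b, q (T a - T b) ≤ L * q (a - b)) (x y : X) (c : ℝ) :
    q (x + c • (T x - T y) - y) ≤
      q (x - y) + |c| * nuLP q T * q (x + c • (T x - T y) - y) + c ^ 2 * L * q (T x - T y) := by
  set v := T x - T y
  set x' := x + c • v
  rcases eq_or_ne x' y with h | hne
  · rw [h, sub_self, map_zero]
    have := nuLP_nonneg q T
    positivity
  have hw := sub_ne_zero.2 hne
  have hA := pos_of_mem_eqNorms hq hw
  obtain ⟨g, hg₁, hg₂⟩ := exists_dualNormP_mul_eq hq (x' - y)
  have hg := abs_apply_le_of_dualNormP_mul_eq hq hw hg₂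
  have hν := abs_apply_le_nuLP_mul hq hT hne hg₁ hg₂
  have hdrift : |g (T x' - T x)| ≤ q (x' - y) * (L * (|c| * q v)) := by
    refine (hg _).trans (mul_le_mul_of_nonneg_left ?_ hA.le)
    simpa [x', map_smul_eq_mul] using hT x' x
  -- `v = (T x' - T y) - (T x' - T x)`: the radius controls the first part, `hdrift` the second
  have hsplit : q (x' - y) ^ 2 = g (x - y) + c * (g (T x' - T y) - g (T x' - T x)) := by
    rw [← hg₁]
    simp only [x', v, map_sub, map_add, map_smul, smul_eq_mul]
    ring
  have hc : c * (g (T x' - T y) - g (T x' - T x)) ≤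
      |c| * (nuLP q T * q (x' - y) ^ 2 + q (x' - y) * (L * (|c| * q v))) :=
    calc c * (g (T x' - T y) - g (T x' - T x))
        ≤ |c| * |g (T x' - T y) - g (T x' - T x)| := by rw [← abs_mul]; exact le_abs_self _
      _ ≤ |c| * (|g (T x' - T y)| + |g (T x' - T x)|) := by gcongr; exact abs_sub _ _
      _ ≤ _ := by gcongr
  have hgu : g (x - y) ≤ q (x' - y) * q (x - y) := (le_abs_self _).trans (hg _)
  have hc2 : |c| * (q (x' - y) * (L * (|c| * q v))) = q (x' - y) * (c ^ 2 * L * q v) := by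
    rw [← sq_abs c]; ring
  refine le_of_mul_le_mul_left ?_ hA
  linarith

lemma nuLP_le_of_le_mul (hp : p ∈ eqNorms X) (hq : q ∈ eqNorms X) (hL : 0 ≤ L)
    (hT : ∀ a b, q (T a - T b) ≤ L * q (a - b)) {D t : ℝ} (hD : 1 ≤ D) (ht : 0 < t)
    (hpq : ∀ x, p x ≤ D * q x) (hqp : ∀ x, q x ≤ D * p x) :
    nuLP p T ≤ (D ^ 2 - 1) / t + D ^ 2 * (1 + t * L) * nuLP q T + D ^ 2 * t * L ^ 2 := by
  have hν := nuLP_nonneg q T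
  have hD2 : 0 ≤ D ^ 2 - 1 := by nlinarith
  refine Real.sSup_le ?_ (by positivity)
  rintro _ ⟨x, y, f, hxy, hf₁, hf₂, rfl⟩
  set u := x - y
  set v := T x - T y
  have hP := pos_of_mem_eqNorms hp (sub_ne_zero.2 hxy)
  have hf := abs_apply_le_of_dualNormP_mul_eq hp (sub_ne_zero.2 hxy) hf₂
  obtain ⟨σ, hσ, hσv⟩ : ∃ σ : ℝ, |σ| = 1 ∧ σ * f v = |f v| := by
    rcases le_total 0 (f v) with h | h
    · exact ⟨1, by simp, by simp [abs_of_nonneg h]⟩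
    · exact ⟨-1, by simp, by simp [abs_of_nonpos h]⟩
  set w := x + (t * σ) • v - y
  have hwu : w = u + (t * σ) • v := by simp only [w, u]; abel
  have hfw : f w = p u ^ 2 + t * |f v| := by
    rw [hwu, map_add, map_smul, smul_eq_mul, hf₁, ← hσv]; ring
  have hqw₁ : q w ≤ q u + t * q v := by
    simpa [hwu, map_smul_eq_mul, abs_mul, hσ, abs_of_pos ht] using map_add_le_add q u ((t * σ) • v)
  have hqw₂ : q w ≤ q u + t * nuLP q T * q w + t ^ 2 * L * q v := by
    simpa [abs_mul, hσ, abs_of_pos ht, mul_pow, ← sq_abs σ] using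
      seminorm_add_smul_sub_le hq hL hT x y (t * σ)
  have hqu : q u ≤ D * p u := hqp u
  have hqv : q v ≤ L * (D * p u) := (hT x y).trans (by gcongr)
  have hqw : q w ≤ D * p u * (1 + t * (1 + t * L) * nuLP q T + t ^ 2 * L ^ 2) := by
    have h1 : t * nuLP q T * q w ≤ t * nuLP q T * (D * p u + t * (L * (D * p u))) := by
      gcongr; linarith [mul_le_mul_of_nonneg_left hqv ht.le]
    have h2 : t ^ 2 * L * q v ≤ t ^ 2 * L * (L * (D * p u)) := by gcongr
    linarith
  have key : p u ^ 2 + t * |f v| ≤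
      D ^ 2 * p u ^ 2 * (1 + t * (1 + t * L) * nuLP q T + t ^ 2 * L ^ 2) :=
    calc p u ^ 2 + t * |f v| = f w := hfw.symm
      _ ≤ p u * p w := (le_abs_self _).trans (hf w)
      _ ≤ p u * (D * (D * p u * (1 + t * (1 + t * L) * nuLP q T + t ^ 2 * L ^ 2))) := by
        gcongr; exact (hpq w).trans (by gcongr)
      _ = _ := by ring
  rw [div_le_iff₀ (by positivity)]
  refine le_of_mul_le_mul_left ?_ ht
  have : t * (((D ^ 2 - 1) / t + D ^ 2 * (1 + t * L) * nuLP q T + D ^ 2 * t * L ^ 2) * p u ^ 2) =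
      D ^ 2 * p u ^ 2 * (1 + t * (1 + t * L) * nuLP q T + t ^ 2 * L ^ 2) - p u ^ 2 := by
    field_simp; ring
  linarith

def nuLPDiffBound (L t D : ℝ) : ℝ :=
  (D ^ 2 - 1) / t + (D ^ 2 * (1 + t * L) - 1) * L + D ^ 2 * t * L ^ 2

lemma abs_nuLP_sub_nuLP_le (hp : p ∈ eqNorms X) (hq : q ∈ eqNorms X) (hL : 0 ≤ L)
    (hTp : ∀ a b, p (T a - T b) ≤ L * p (a - b)) (hTq : ∀ a b, q (T a - T b) ≤ L * q (a - b))
    {D t : ℝ} (hD : 1 ≤ D) (ht : 0 < t) (hpq : ∀ x, p x ≤ D * q x) (hqp : ∀ x, q x ≤ D * p x) :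
    |nuLP p T - nuLP q T| ≤ nuLPDiffBound L t D := by
  have hc : 0 ≤ D ^ 2 * (1 + t * L) - 1 := by nlinarith [mul_nonneg ht.le hL]
  have hpL := mul_le_mul_of_nonneg_left (nuLP_le hp hL hTp) hc
  have hqL := mul_le_mul_of_nonneg_left (nuLP_le hq hL hTq) hc
  rw [abs_sub_le_iff, nuLPDiffBound]
  constructor
  · linarith [nuLP_le_of_le_mul hp hq hL hTq hD ht hpq hqp]
  · linarith [nuLP_le_of_le_mul hq hp hL hTp hD ht hqp hpq]

end

lemma exists_nuLPDiffBound_lt (L : ℝ) {ε : ℝ} (hε : 0 < ε) :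
    ∃ t > 0, ∃ D > 1, nuLPDiffBound L t D < ε := by
  obtain ⟨t, ht, htε⟩ : ∃ t > 0, 2 * t * L ^ 2 < ε :=
    ⟨ε / (2 * L ^ 2 + 1), by positivity, by
      rw [mul_div_assoc', div_mul_eq_mul_div, div_lt_iff₀ (by positivity)]; nlinarith⟩
  have hcont : Continuous (nuLPDiffBound L t) := by unfold nuLPDiffBound; fun_prop
  have h1 : nuLPDiffBound L t 1 < ε := by norm_num [nuLPDiffBound]; linarith
  obtain ⟨D, hDε, hD⟩ := ((hcont.continuousAt.eventually (gt_mem_nhds h1)).filter_mono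
    nhdsWithin_le_nhds |>.and (self_mem_nhdsWithin (s := Set.Ioi 1))).exists
  exact ⟨t, ht, D, hD, hDε⟩

theorem lipschitz_numerical_radius_uniformly_continuous_on_bounded_general
    {X : Type*} [NormedAddCommGroup X] [NormedSpace ℝ X]
    (T : X → X) (hT : IsLip0 T) :
    ∀ κ > (0 : ℝ), ∀ ε > (0 : ℝ), ∃ δ > (0 : ℝ), ∀ p ∈ eqNorms X, ∀ q ∈ eqNorms X,
      normDist p (normSeminorm ℝ X) < κ → normDist q (normSeminorm ℝ X) < κ →
      normDist p q < δ → |nuLP p T - nuLP q T| < ε := by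
  intro κ _ ε hε
  obtain ⟨⟨K, hK⟩, -⟩ := hT
  have hL : 0 ≤ exp κ * K * exp κ := by positivity
  have hLip : ∀ p ∈ eqNorms X, normDist p (normSeminorm ℝ X) < κ →
      ∀ a b, p (T a - T b) ≤ exp κ * K * exp κ * p (a - b) := fun p hp hpκ =>
    seminorm_map_sub_le_of_le_mul (exp_pos κ).le K.coe_nonneg
      (le_exp_mul_of_normDist_lt hp normSeminorm_mem_eqNorms hpκ)
      fun a b => by simpa [dist_eq_norm] using hK.dist_le_mul a b
  obtain ⟨t, ht, D, hD, hDε⟩ := exists_nuLPDiffBound_lt (exp κ * K * exp κ) hε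
  refine ⟨log D, log_pos hD, fun p hp q hq hpκ hqκ hpq => ?_⟩
  have hDpq := le_exp_mul_of_normDist_lt hp hq hpq
  simp only [exp_log (zero_lt_one.trans hD)] at hDpq
  exact (abs_nuLP_sub_nuLP_le hp hq hL (hLip p hp hpκ) (hLip q hq hqκ) hD.le ht
    (fun x => (hDpq x).1) (fun x => (hDpq x).2)).trans_lt hDε

/-- For a Lipschitz map `T ∈ Lip₀(X,X)` on a real Banach space `X`, the map
`p ↦ ν_L^p(T)` is uniformly continuous on every bounded subset of `(E(X), μ)`. -/
theorem lipschitz_numerical_radius_uniformly_continuous_on_bounded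
    {X : Type*} [NormedAddCommGroup X] [NormedSpace ℝ X] [CompleteSpace X]
    (T : X → X) (hT : IsLip0 T) :
    ∀ κ > (0 : ℝ), ∀ ε > (0 : ℝ), ∃ δ > (0 : ℝ), ∀ p ∈ eqNorms X, ∀ q ∈ eqNorms X,
      normDist p (normSeminorm ℝ X) < κ → normDist q (normSeminorm ℝ X) < κ →
      normDist p q < δ → |nuLP p T - nuLP q T| < ε :=
  lipschitz_numerical_radius_uniformly_continuous_on_bounded_general T hT

end
end

section
/- Let X be a real Banach space and T ∈ Lip₀(X,X). Suppose T attains its Lipschitz numerical radius at (x, y, x*), i.e., x ≠ y, x* ∈ D(x − y) and |x*(Tx − Ty)|/‖x − y‖² = ν_L(T). Then for every 0 < λ < 1, setting z = λx + (1−λ)y, one has (1−λ)x* ∈ D(x − z) and λx* ∈ D(z − y), and T attains its Lipschitz numerical radius at (x, z, (1−λ)x*) and at (z, y, λx*); that is, |(1−λ)x*(Tx − Tz)|/‖x − z‖² = ν_L(T) and |λx*(Tz − Ty)|/‖z − y‖² = ν_L(T). -/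
noncomputable section

/-- The Lipschitz norm of a map between normed spaces. -/
def LipNorm {X Y : Type*} [NormedAddCommGroup X] [NormedAddCommGroup Y] (T : X → Y) : ℝ :=
  sSup {r : ℝ | ∃ x y : X, x ≠ y ∧ r = ‖T x - T y‖ / ‖x - y‖}

/-- `D(x)`: functionals with `f x = ‖f‖ ‖x‖ = ‖x‖²`. -/
def Dset (𝕜 : Type*) {X : Type*} [RCLike 𝕜] [NormedAddCommGroup X] [NormedSpace 𝕜 X]
    (x : X) : Set (X →L[𝕜] 𝕜) :=
  {f | f x = ((‖x‖ ^ 2 : ℝ) : 𝕜) ∧ ‖f‖ * ‖x‖ = ‖x‖ ^ 2}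

/-- The Lipschitz numerical radius. -/
def nuL (𝕜 : Type*) {X : Type*} [RCLike 𝕜] [NormedAddCommGroup X] [NormedSpace 𝕜 X]
    (T : X → X) : ℝ :=
  sSup {r : ℝ | ∃ (x y : X) (f : X →L[𝕜] 𝕜), x ≠ y ∧ f ∈ Dset 𝕜 (x - y) ∧
    r = ‖f (T x - T y)‖ / ‖x - y‖ ^ 2}

/-- The Lipschitz numerical index. -/
def nL (𝕜 X : Type*) [RCLike 𝕜] [NormedAddCommGroup X] [NormedSpace 𝕜 X] : ℝ :=
  sInf {r : ℝ | ∃ T : X → X, IsLip0 T ∧ LipNorm T = 1 ∧ r = nuL 𝕜 T}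

/-!
With `z = λx + (1-λ)y` we have `x - z = (1-λ)(x - y)` and `z - y = λ(x - y)`, and rescaling `x*`
by a positive factor keeps it in `D` of the rescaled vector. The numerical radius therefore bounds
`|x*(Tx - Tz)| ≤ ν(1-λ)‖x - y‖²` and `|x*(Tz - Ty)| ≤ νλ‖x - y‖²`. The two values add up to
`x*(Tx - Ty)`, whose modulus is `ν‖x - y‖²`, so by the triangle inequality both bounds are equalities.
-/

section Dset

variable {𝕜 X : Type*} [RCLike 𝕜] [NormedAddCommGroup X] [NormedSpace 𝕜 X]

theorem norm_eq_of_mem_Dset {v : X} {f : X →L[𝕜] 𝕜} (hv : v ≠ 0) (hf : f ∈ Dset 𝕜 v) :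
    ‖f‖ = ‖v‖ :=
  mul_right_cancel₀ (norm_ne_zero_iff.mpr hv) (by rw [hf.2, sq])

theorem norm_apply_sub_le_of_mem_Dset {T : X → X} {K : NNReal} (hT : LipschitzWith K T)
    {u v : X} (huv : u ≠ v) {g : X →L[𝕜] 𝕜} (hg : g ∈ Dset 𝕜 (u - v)) :
    ‖g (T u - T v)‖ ≤ K * ‖u - v‖ ^ 2 :=
  calc ‖g (T u - T v)‖ ≤ ‖g‖ * ‖T u - T v‖ := g.le_opNorm _
    _ ≤ ‖u - v‖ * (K * ‖u - v‖) := by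
      rw [norm_eq_of_mem_Dset (sub_ne_zero.mpr huv) hg]
      gcongr
      exact hT.norm_sub_le u v
    _ = K * ‖u - v‖ ^ 2 := by ring

theorem norm_apply_sub_div_le_nuL {T : X → X} {K : NNReal} (hT : LipschitzWith K T)
    {u v : X} (huv : u ≠ v) {g : X →L[𝕜] 𝕜} (hg : g ∈ Dset 𝕜 (u - v)) :
    ‖g (T u - T v)‖ / ‖u - v‖ ^ 2 ≤ nuL 𝕜 T := by
  refine le_csSup ⟨K, ?_⟩ ⟨u, v, g, huv, hg, rfl⟩
  rintro r ⟨u', v', g', huv', hg', rfl⟩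
  have : 0 < ‖u' - v'‖ := norm_pos_iff.mpr (sub_ne_zero.mpr huv')
  rw [div_le_iff₀ (by positivity)]
  exact norm_apply_sub_le_of_mem_Dset hT huv' hg'

end Dset

section Real

variable {X : Type*} [NormedAddCommGroup X] [NormedSpace ℝ X]

theorem smul_mem_Dset {v : X} {f : X →L[ℝ] ℝ} {c : ℝ} (hc : 0 ≤ c) (hf : f ∈ Dset ℝ v) :
    c • f ∈ Dset ℝ (c • v) := by
  obtain ⟨hfv, hfn⟩ := hf
  refine ⟨?_, ?_⟩
  · simp only [smul_apply, map_smul, hfv, norm_smul, Real.norm_of_nonneg hc,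
      smul_eq_mul, RCLike.ofReal_real_eq_id, id]
    ring
  · rw [norm_smul, norm_smul, Real.norm_of_nonneg hc]
    linear_combination c ^ 2 * hfn

theorem abs_smul_apply_div_norm_smul_sq {v w : X} {f : X →L[ℝ] ℝ} {c : ℝ} (hc : 0 < c) :
    |(c • f) w| / ‖c • v‖ ^ 2 = |f w| / (c * ‖v‖ ^ 2) := by
  rw [smul_apply, smul_eq_mul, abs_mul, abs_of_pos hc, norm_smul,
    Real.norm_of_nonneg hc.le, mul_pow, sq c, mul_assoc, mul_div_mul_left _ _ hc.ne']

theorem abs_apply_sub_le_of_sub_eq_smul {T : X → X} {K : NNReal} (hT : LipschitzWith K T)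
    {v : X} (hv : v ≠ 0) {f : X →L[ℝ] ℝ} (hf : f ∈ Dset ℝ v) {c : ℝ} (hc : 0 < c) {u w : X}
    (huw : u - w = c • v) :
    |f (T u - T w)| ≤ nuL ℝ T * (c * ‖v‖ ^ 2) := by
  have huw' : u ≠ w := by
    rw [← sub_ne_zero, huw]
    exact smul_ne_zero hc.ne' hv
  have h := norm_apply_sub_div_le_nuL hT huw' (huw ▸ smul_mem_Dset hc.le hf)
  rw [Real.norm_eq_abs, huw, abs_smul_apply_div_norm_smul_sq hc,
    div_le_iff₀ (by have := norm_pos_iff.mpr hv; positivity)] at h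
  exact h

end Real

theorem lipschitz_numerical_radius_attaining_on_segment_general
    {X : Type*} [NormedAddCommGroup X] [NormedSpace ℝ X]
    (T : X → X) (hT : IsLip0 T) (x y : X) (f : X →L[ℝ] ℝ)
    (hxy : x ≠ y) (hf : f ∈ Dset ℝ (x - y))
    (hatt : |f (T x - T y)| / ‖x - y‖ ^ 2 = nuL ℝ T)
    (l : ℝ) (hl0 : 0 < l) (hl1 : l < 1) :
    ((1 - l) • f ∈ Dset ℝ (x - (l • x + (1 - l) • y)) ∧
      l • f ∈ Dset ℝ ((l • x + (1 - l) • y) - y)) ∧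
    |((1 - l) • f) (T x - T (l • x + (1 - l) • y))| / ‖x - (l • x + (1 - l) • y)‖ ^ 2
      = nuL ℝ T ∧
    |(l • f) (T (l • x + (1 - l) • y) - T y)| / ‖(l • x + (1 - l) • y) - y‖ ^ 2
      = nuL ℝ T := by
  obtain ⟨⟨K, hK⟩, -⟩ := hT
  set z := l • x + (1 - l) • y
  have hv : x - y ≠ 0 := sub_ne_zero.mpr hxy
  have hxz : x - z = (1 - l) • (x - y) := by module
  have hzy : z - y = l • (x - y) := by module
  have hl1' : 0 < 1 - l := sub_pos.mpr hl1
  have hd : 0 < ‖x - y‖ ^ 2 := by have := norm_pos_iff.mpr hv; positivity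
  have ha := abs_apply_sub_le_of_sub_eq_smul hK hv hf hl1' hxz
  have hb := abs_apply_sub_le_of_sub_eq_smul hK hv hf hl0 hzy
  have hsum : f (T x - T z) + f (T z - T y) = f (T x - T y) := by
    rw [← map_add, sub_add_sub_cancel]
  have hxy_eq : |f (T x - T y)| = nuL ℝ T * ‖x - y‖ ^ 2 := by
    rw [← hatt, div_mul_cancel₀ _ hd.ne']
  have htri := abs_add_le (f (T x - T z)) (f (T z - T y))
  rw [hsum, hxy_eq] at htri
  refine ⟨⟨hxz ▸ smul_mem_Dset hl1'.le hf, hzy ▸ smul_mem_Dset hl0.le hf⟩, ?_, ?_⟩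
  · rw [hxz, abs_smul_apply_div_norm_smul_sq hl1', div_eq_iff (by positivity)]
    linarith
  · rw [hzy, abs_smul_apply_div_norm_smul_sq hl0, div_eq_iff (by positivity)]
    linarith

/-- If `T ∈ Lip₀(X,X)` attains its Lipschitz numerical radius at `(x, y, x*)`,
then for every `0 < λ < 1`, with `z = λx + (1-λ)y`, one has `(1-λ)x* ∈ D(x-z)`,
`λx* ∈ D(z-y)`, and `T` attains its Lipschitz numerical radius at `(x, z, (1-λ)x*)`
and at `(z, y, λx*)`. -/
theorem lipschitz_numerical_radius_attaining_on_segment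
    {X : Type*} [NormedAddCommGroup X] [NormedSpace ℝ X] [CompleteSpace X]
    (T : X → X) (hT : IsLip0 T) (x y : X) (f : X →L[ℝ] ℝ)
    (hxy : x ≠ y) (hf : f ∈ Dset ℝ (x - y))
    (hatt : |f (T x - T y)| / ‖x - y‖ ^ 2 = nuL ℝ T)
    (l : ℝ) (hl0 : 0 < l) (hl1 : l < 1) :
    ((1 - l) • f ∈ Dset ℝ (x - (l • x + (1 - l) • y)) ∧
      l • f ∈ Dset ℝ ((l • x + (1 - l) • y) - y)) ∧
    |((1 - l) • f) (T x - T (l • x + (1 - l) • y))| / ‖x - (l • x + (1 - l) • y)‖ ^ 2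
      = nuL ℝ T ∧
    |(l • f) (T (l • x + (1 - l) • y) - T y)| / ‖(l • x + (1 - l) • y) - y‖ ^ 2
      = nuL ℝ T :=
  lipschitz_numerical_radius_attaining_on_segment_general T hT x y f hxy hf hatt l hl0 hl1

end
end

section
/- Let X and Y be real Banach spaces and let G : X → Y be a bounded linear operator with ‖G‖ = 1. Then G is a Daugavet center if and only if for every y ∈ Y with ‖y‖ = 1, every f ∈ Lip₀(X,ℝ) and every ε > 0, there exists u ∈ S(f, ε) such that ‖Gu + y‖ > 2 − ε. -/
noncomputable section

/-- A bounded linear operator `G : X → Y` is a Daugavet center if `‖G + T‖ = ‖G‖ + ‖T‖`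
for every rank-one operator `T = x* ⊗ y₀`. -/
def IsDaugavetCenter {X Y : Type*} [NormedAddCommGroup X] [NormedSpace ℝ X]
    [NormedAddCommGroup Y] [NormedSpace ℝ Y] (G : X →L[ℝ] Y) : Prop :=
  ∀ (f : X →L[ℝ] ℝ) (y₀ : Y),
    ‖G + f.smulRight y₀‖ = ‖G‖ + ‖f.smulRight y₀‖

/-- The Lip-slice `S(f, ε)` of the unit sphere of `X`. -/
def LipSlice {X : Type*} [NormedAddCommGroup X] [NormedSpace ℝ X] (f : X → ℝ) (ε : ℝ) :
    Set X :=
  {z | ∃ u v : X, u ≠ v ∧ z = ‖u - v‖⁻¹ • (u - v) ∧ (f u - f v) / ‖u - v‖ > LipNorm f - ε}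

/-!
Both conditions are equivalent to the slice condition of Bosenko and Kadets (`HasDaugavetSlices`):
every slice of the unit ball `B_X` contains a point `x` with `‖G x + y‖ > 2 - ε`. A linear
functional is a Lipschitz function whose Lip-slices are slices of `B_X`, which gives one direction.
For the other, the slice condition and Hahn–Banach put `B_X` inside the closed convex hull of
`D = {d ∈ B_X | ‖G d + y‖ > 2 - δ}`. If `(f a - f b) / ‖a - b‖` is almost `‖f‖_L`, approximate
`(a - b) / ‖a - b‖` by a convex combination `∑ wᵢ dᵢ` of points of `D` and walk from `b` in the
steps `‖a - b‖ wᵢ dᵢ`: the increments of `f` add up to almost `‖f‖_L ‖a - b‖`, so some step has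
slope almost `‖f‖_L`, and its direction `dᵢ / ‖dᵢ‖` lies in `S(f, ε)`.
-/

open Metric
open scoped NNReal

theorem norm_add_smul_of_norm_add_eq {E : Type*} [NormedAddCommGroup E] [NormedSpace ℝ E]
    {a b : E} (hab : ‖a + b‖ = ‖a‖ + ‖b‖) {t : ℝ} (ht : 0 ≤ t) : ‖a + t • b‖ = ‖a‖ + t * ‖b‖ := by
  refine le_antisymm ?_ ?_
  · simpa [norm_smul, abs_of_nonneg ht] using norm_add_le a (t • b)
  rcases le_total t 1 with ht1 | ht1
  · have h := norm_add_le (a + t • b) ((1 - t) • b)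
    rw [show a + t • b + (1 - t) • b = a + b by module, hab, norm_smul,
      Real.norm_of_nonneg (sub_nonneg.2 ht1)] at h
    linarith
  · have h := norm_add_le (a + t • b) ((t - 1) • a)
    rw [show a + t • b + (t - 1) • a = t • (a + b) by module, norm_smul, norm_smul, hab,
      Real.norm_of_nonneg ht, Real.norm_of_nonneg (sub_nonneg.2 ht1)] at h
    nlinarith

theorem Finset.exists_lt_map_add_sub_of_lt_sum {ι E : Type*} [AddCommGroup E] (f : E → ℝ)
    (v : ι → E) (s : ι → ℝ) (t : Finset ι) (b : E)
    (h : ∑ i ∈ t, s i < f (b + ∑ i ∈ t, v i) - f b) :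
    ∃ i ∈ t, ∃ p, s i < f (p + v i) - f p := by
  classical
  induction t using Finset.induction_on with
  | empty => simp at h
  | insert a t ha ih =>
    rw [Finset.sum_insert ha, Finset.sum_insert ha] at h
    by_cases hstep : s a < f (b + ∑ i ∈ t, v i + v a) - f (b + ∑ i ∈ t, v i)
    · exact ⟨a, Finset.mem_insert_self a t, _, hstep⟩
    · have hrest : ∑ i ∈ t, s i < f (b + ∑ i ∈ t, v i) - f b := by
        rw [show b + (v a + ∑ i ∈ t, v i) = b + ∑ i ∈ t, v i + v a by abel] at h
        linarith
      obtain ⟨i, hi, hp⟩ := ih hrest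
      exact ⟨i, Finset.mem_insert_of_mem hi, hp⟩

section LipNorm

variable {X Y : Type*} [NormedAddCommGroup X] [NormedAddCommGroup Y]

theorem lipNorm_nonneg (f : X → Y) : 0 ≤ LipNorm f :=
  Real.sSup_nonneg <| by rintro _ ⟨u, v, -, rfl⟩; positivity

theorem LipschitzWith.norm_sub_div_le_lipNorm {f : X → Y} {K : ℝ≥0} (hf : LipschitzWith K f)
    {u v : X} (huv : u ≠ v) : ‖f u - f v‖ / ‖u - v‖ ≤ LipNorm f := by
  refine le_csSup ⟨K, ?_⟩ ⟨u, v, huv, rfl⟩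
  rintro r ⟨u, v, huv, rfl⟩
  rw [div_le_iff₀ (norm_pos_iff.2 (sub_ne_zero.2 huv)), ← dist_eq_norm, ← dist_eq_norm]
  exact hf.dist_le_mul u v

theorem LipschitzWith.norm_sub_le_lipNorm_mul {f : X → Y} {K : ℝ≥0} (hf : LipschitzWith K f)
    (u v : X) : ‖f u - f v‖ ≤ LipNorm f * ‖u - v‖ := by
  rcases eq_or_ne u v with rfl | huv
  · simp
  · exact (div_le_iff₀ (norm_pos_iff.2 (sub_ne_zero.2 huv))).1 (hf.norm_sub_div_le_lipNorm huv)

theorem exists_lt_sub_div_norm_of_lt_lipNorm [Nontrivial X] {f : X → ℝ} {r : ℝ}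
    (hr : r < LipNorm f) : ∃ u v, u ≠ v ∧ r < (f u - f v) / ‖u - v‖ := by
  obtain ⟨u₀, v₀, huv₀⟩ := exists_pair_ne X
  obtain ⟨_, ⟨u, v, huv, rfl⟩, hlt⟩ :=
    exists_lt_of_lt_csSup (s := {r | ∃ u v : X, u ≠ v ∧ r = ‖f u - f v‖ / ‖u - v‖})
      ⟨_, u₀, v₀, huv₀, rfl⟩ hr
  rcases le_total (f v) (f u) with h | h
  · exact ⟨u, v, huv, by rwa [Real.norm_of_nonneg (sub_nonneg.2 h)] at hlt⟩
  · refine ⟨v, u, huv.symm, ?_⟩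
    rwa [Real.norm_of_nonpos (sub_nonpos.2 h), neg_sub, norm_sub_rev] at hlt

theorem ContinuousLinearMap.lipNorm_eq_opNorm {𝕜 : Type*} [NontriviallyNormedField 𝕜]
    [NormedSpace 𝕜 X] [NormedSpace 𝕜 Y] (g : X →L[𝕜] Y) : LipNorm g = ‖g‖ := by
  refine le_antisymm (Real.sSup_le ?_ (norm_nonneg g)) ?_
  · rintro r ⟨u, v, huv, rfl⟩
    rw [div_le_iff₀ (norm_pos_iff.2 (sub_ne_zero.2 huv)), ← map_sub]
    exact g.le_opNorm _
  · refine g.opNorm_le_bound (lipNorm_nonneg g) fun x ↦ ?_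
    simpa using g.lipschitz.norm_sub_le_lipNorm_mul x 0

end LipNorm

theorem norm_of_mem_lipSlice {X : Type*} [NormedAddCommGroup X] [NormedSpace ℝ X] {f : X → ℝ}
    {ε : ℝ} {u : X} (hu : u ∈ LipSlice f ε) : ‖u‖ = 1 := by
  obtain ⟨p, q, hpq, rfl, -⟩ := hu
  rw [norm_smul, norm_inv, norm_norm, inv_mul_cancel₀ (norm_pos_iff.2 (sub_ne_zero.2 hpq)).ne']

theorem closedBall_subset_closure_convexHull {X : Type*} [NormedAddCommGroup X]
    [NormedSpace ℝ X] [Nontrivial X] {D : Set X}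
    (hD : ∀ x' : X →L[ℝ] ℝ, ‖x'‖ = 1 → ∀ δ > 0, ∃ d ∈ D, 1 - δ < x' d) :
    closedBall 0 1 ⊆ closure (convexHull ℝ D) := by
  intro e he
  by_contra he'
  obtain ⟨φ, u, hφD, hu⟩ :=
    geometric_hahn_banach_closed_point (convex_convexHull ℝ D).closure isClosed_closure he'
  have hφD' : ∀ d ∈ D, φ d < u := fun d hd ↦ hφD d (subset_closure (subset_convexHull ℝ D hd))
  have hue : u < ‖φ‖ := by
    have := (le_abs_self _).trans ((φ.le_opNorm e).trans
      (mul_le_of_le_one_right (norm_nonneg φ) (mem_closedBall_zero_iff.1 he)))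
    linarith
  rcases eq_or_ne φ 0 with rfl | hφ
  · obtain ⟨x', hx', -⟩ := exists_dual_vector' ℝ (0 : X)
    obtain ⟨d, hd, -⟩ := hD x' hx' 1 one_pos
    have := hφD' d hd
    simp only [zero_apply] at this hu
    linarith
  · have hφpos : 0 < ‖φ‖ := norm_pos_iff.2 hφ
    obtain ⟨d, hd, hlt⟩ := hD (‖φ‖⁻¹ • φ) (by simp [norm_smul, hφpos.ne'])
      ((‖φ‖ - u) / ‖φ‖) (div_pos (by linarith) hφpos)
    have := hφD' d hd
    rw [smul_apply, smul_eq_mul, one_sub_div hφpos.ne', sub_sub_cancel,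
      div_lt_iff₀' hφpos, mul_inv_cancel_left₀ hφpos.ne'] at hlt
    linarith

theorem exists_mem_lipSlice_sameRay {X : Type*} [NormedAddCommGroup X] [NormedSpace ℝ X]
    [Nontrivial X] {f : X → ℝ} {K : ℝ≥0} (hf : LipschitzWith K f) {D : Set X}
    (hD₁ : D ⊆ closedBall 0 1) (hD₀ : (0 : X) ∉ D) (hD : closedBall 0 1 ⊆ closure (convexHull ℝ D))
    {ε : ℝ} (hε : 0 < ε) :
    ∃ d ∈ D, ∃ u ∈ LipSlice f ε, SameRay ℝ u d := by
  set L := LipNorm f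
  obtain ⟨a, b, hab, hq⟩ := exists_lt_sub_div_norm_of_lt_lipNorm (f := f) (r := L - ε / 2)
    (by linarith)
  set r := ‖a - b‖
  have hr : 0 < r := norm_pos_iff.2 (sub_ne_zero.2 hab)
  have he : r⁻¹ • (a - b) ∈ closedBall (0 : X) 1 := by
    simp [norm_smul, r, hr.ne']
  have hopen : IsOpen {c : X | (L - ε / 2) * r < f (b + r • c) - f b} :=
    isOpen_lt continuous_const (by have := hf.continuous; fun_prop)
  have hae : (L - ε / 2) * r < f (b + r • r⁻¹ • (a - b)) - f b := by
    rwa [smul_inv_smul₀ hr.ne', add_sub_cancel, ← lt_div_iff₀ hr]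
  obtain ⟨c, hc, hcD⟩ := mem_closure_iff.1 (hD he) _ hopen hae
  obtain ⟨ι, _, w, z, hw₀, hw₁, hz, rfl⟩ := mem_convexHull_iff_exists_fintype.1 hcD
  obtain ⟨i, -, p, hi⟩ := Finset.univ.exists_lt_map_add_sub_of_lt_sum f
    (fun i ↦ (r * w i) • z i) (fun i ↦ (L - ε / 2) * (r * w i)) b <| by
      simp_rw [← Finset.mul_sum, hw₁, mul_one, ← smul_smul, ← Finset.smul_sum]
      exact hc
  set v := (r * w i) • z i
  have hwi : 0 < w i := (hw₀ i).lt_of_ne fun h ↦ by simp [v, ← h] at hi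
  have hzi : z i ≠ 0 := fun h ↦ hD₀ (h ▸ hz i)
  have hv : ‖v‖ = r * w i * ‖z i‖ := by
    rw [norm_smul, Real.norm_of_nonneg (by positivity)]
  have hvpos : 0 < ‖v‖ := by rw [hv]; exact mul_pos (by positivity) (norm_pos_iff.2 hzi)
  have hvle : ‖v‖ ≤ r * w i := by
    rw [hv]; exact mul_le_of_le_one_right (by positivity) (mem_closedBall_zero_iff.1 (hD₁ (hz i)))
  have hlow : -(L * ‖v‖) ≤ f (p + v) - f p := by
    have := hf.norm_sub_le_lipNorm_mul (p + v) p
    rw [add_sub_cancel_left, Real.norm_eq_abs] at this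
    linarith [neg_abs_le (f (p + v) - f p)]
  have hquot : L - ε < (f (p + v) - f p) / ‖p + v - p‖ := by
    rw [add_sub_cancel_left, lt_div_iff₀ hvpos]
    -- for `L < ε / 2` the Lipschitz lower bound `hlow` alone suffices
    rcases le_or_gt (ε / 2) L with h | h <;> nlinarith
  refine ⟨z i, hz i, ‖v‖⁻¹ • v, ⟨p + v, p, ?_, by rw [add_sub_cancel_left], hquot⟩, ?_⟩
  · simpa using norm_pos_iff.1 hvpos
  · rw [smul_smul]
    exact SameRay.sameRay_pos_smul_left _ (by positivity)

section Daugavet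

variable {X Y : Type*} [NormedAddCommGroup X] [NormedSpace ℝ X] [NormedAddCommGroup Y]
  [NormedSpace ℝ Y] {G : X →L[ℝ] Y}

def HasDaugavetSlices (G : X →L[ℝ] Y) : Prop :=
  ∀ y : Y, ‖y‖ = 1 → ∀ x' : X →L[ℝ] ℝ, ‖x'‖ = 1 → ∀ ε > 0,
    ∃ x, ‖x‖ ≤ 1 ∧ 1 - ε < x' x ∧ 2 - ε < ‖G x + y‖

theorem IsDaugavetCenter.hasDaugavetSlices (hG : ‖G‖ = 1) (h : IsDaugavetCenter G) :
    HasDaugavetSlices G := by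
  intro y hy x' hx' ε hε
  have hT : ‖G + x'.smulRight y‖ = 2 := by
    rw [h, hG, x'.norm_smulRight_apply, hx', hy]; norm_num
  obtain ⟨w, hw, hGw⟩ :=
    (G + x'.smulRight y).exists_lt_apply_of_lt_opNorm (r := 2 - ε / 2) (by linarith)
  obtain ⟨x, hx, hx'x, hGx⟩ : ∃ x, ‖x‖ ≤ 1 ∧ 0 ≤ x' x ∧ 2 - ε / 2 < ‖G x + x' x • y‖ := by
    rcases le_total 0 (x' w) with h | h
    · exact ⟨w, hw.le, h, by simpa using hGw⟩
    · refine ⟨-w, by simpa using hw.le, by simpa using h, ?_⟩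
      rw [map_neg, map_neg, neg_smul, ← neg_add, norm_neg]
      simpa using hGw
  have hGx1 : ‖G x‖ ≤ 1 := by simpa [hG] using G.le_opNorm_of_le hx
  have hx'x1 : x' x ≤ 1 := by simpa [hx', abs_of_nonneg hx'x] using x'.le_opNorm_of_le hx
  have hlarge : ‖G x + x' x • y‖ ≤ ‖G x‖ + x' x := by
    simpa [norm_smul, hy, abs_of_nonneg hx'x] using norm_add_le (G x) (x' x • y)
  have hclose : ‖G x + x' x • y‖ ≤ ‖G x + y‖ + (1 - x' x) := by
    have := norm_sub_le (G x + y) ((1 - x' x) • y)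
    rwa [show G x + y - (1 - x' x) • y = G x + x' x • y by module, norm_smul, hy, mul_one,
      Real.norm_of_nonneg (by linarith)] at this
  exact ⟨x, hx, by linarith, by linarith⟩

theorem HasDaugavetSlices.norm_add_smulRight_of_norm_eq_one (hG : ‖G‖ = 1)
    (h : HasDaugavetSlices G) {x' : X →L[ℝ] ℝ} (hx' : ‖x'‖ = 1) {y : Y} (hy : ‖y‖ = 1) :
    ‖G + x'.smulRight y‖ = 2 := by
  refine le_antisymm ?_ (le_of_forall_sub_le fun ε hε ↦ ?_)
  · have := norm_add_le G (x'.smulRight y)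
    rw [hG, x'.norm_smulRight_apply, hx', hy] at this
    linarith
  obtain ⟨x, hx, hx'x, hGx⟩ := h y hy x' hx' (ε / 2) (by linarith)
  have hx'x1 : x' x ≤ 1 := by simpa [hx'] using (le_abs_self _).trans (x'.le_opNorm_of_le hx)
  have hclose : ‖G x + y‖ ≤ ‖(G + x'.smulRight y) x‖ + (1 - x' x) := by
    have := norm_add_le ((G + x'.smulRight y) x) ((1 - x' x) • y)
    rwa [add_apply, ContinuousLinearMap.smulRight_apply,
      show G x + x' x • y + (1 - x' x) • y = G x + y by module, norm_smul, hy, mul_one,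
      Real.norm_of_nonneg (by linarith)] at this
  have := (G + x'.smulRight y).le_opNorm_of_le hx
  linarith

theorem HasDaugavetSlices.isDaugavetCenter (hG : ‖G‖ = 1) (h : HasDaugavetSlices G) :
    IsDaugavetCenter G := by
  intro x' y
  rcases eq_or_ne x' 0 with rfl | hx'
  · simp
  rcases eq_or_ne y 0 with rfl | hy
  · simp
  have hx'pos : 0 < ‖x'‖ := norm_pos_iff.2 hx'
  have hypos : 0 < ‖y‖ := norm_pos_iff.2 hy
  set T := (‖x'‖⁻¹ • x').smulRight (‖y‖⁻¹ • y)
  have hT : ‖T‖ = 1 := by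
    simp [T, ContinuousLinearMap.norm_smulRight_apply, norm_smul, hx'pos.ne', hypos.ne']
  have hxy : x'.smulRight y = (‖x'‖ * ‖y‖) • T := by
    ext v
    rw [smul_apply, ContinuousLinearMap.smulRight_apply,
      ContinuousLinearMap.smulRight_apply, smul_apply, smul_smul, smul_smul,
      smul_eq_mul]
    congr 1
    field_simp
  have hGT : ‖G + T‖ = ‖G‖ + ‖T‖ := by
    rw [h.norm_add_smulRight_of_norm_eq_one hG (by simp [norm_smul, hx'pos.ne'])
      (by simp [norm_smul, hypos.ne']), hG, hT]
    norm_num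
  rw [hxy, norm_add_smul_of_norm_add_eq hGT (by positivity), norm_smul,
    Real.norm_of_nonneg (by positivity)]

theorem HasDaugavetSlices.exists_mem_lipSlice [Nontrivial X] (hG : ‖G‖ ≤ 1)
    (h : HasDaugavetSlices G) {y : Y} (hy : ‖y‖ = 1) {f : X → ℝ} {K : ℝ≥0}
    (hf : LipschitzWith K f) {ε : ℝ} (hε : 0 < ε) :
    ∃ u ∈ LipSlice f ε, 2 - ε < ‖G u + y‖ := by
  set δ := min ε 1 / 2 with hδ_def
  have hδ : 0 < δ := by positivity
  have hδ1 : δ < 1 := by linarith [min_le_right ε 1]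
  have hδε : 2 * δ ≤ ε := by linarith [min_le_left ε 1]
  set D := {d : X | ‖d‖ ≤ 1 ∧ 2 - δ < ‖G d + y‖}
  have hD₀ : (0 : X) ∉ D := fun h0 ↦ by simp [D, hy] at h0; linarith
  have hD : closedBall 0 1 ⊆ closure (convexHull ℝ D) := by
    refine closedBall_subset_closure_convexHull fun x' hx' η hη ↦ ?_
    obtain ⟨x, hx, hx'x, hGx⟩ := h y hy x' hx' (min η δ) (lt_min hη hδ)
    exact ⟨x, ⟨hx, hGx.trans_le' (by linarith [min_le_right η δ])⟩,
      hx'x.trans_le' (by linarith [min_le_left η δ])⟩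
  obtain ⟨d, ⟨hd, hGd⟩, u, hu, hud⟩ :=
    exists_mem_lipSlice_sameRay hf (fun d hd ↦ mem_closedBall_zero_iff.2 hd.1) hD₀ hD hε
  have hud' : ‖u - d‖ = 1 - ‖d‖ := by
    rw [hud.norm_sub, norm_of_mem_lipSlice hu, abs_of_nonneg (by linarith)]
  have hGud : ‖G u - G d‖ ≤ ‖u - d‖ := by
    simpa [← map_sub] using G.le_of_opNorm_le hG (u - d)
  have hGd1 : ‖G d + y‖ ≤ ‖d‖ + 1 := by
    linarith [norm_add_le (G d) y, G.le_of_opNorm_le hG d]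
  have hGu : ‖G d + y‖ ≤ ‖G u + y‖ + ‖G u - G d‖ := by
    have := norm_add_le (G u + y) (G d - G u)
    rwa [show G u + y + (G d - G u) = G d + y by abel, norm_sub_rev] at this
  exact ⟨u, hu, by linarith⟩

theorem isDaugavetCenter_iff_hasDaugavetSlices (hG : ‖G‖ = 1) :
    IsDaugavetCenter G ↔ HasDaugavetSlices G :=
  ⟨IsDaugavetCenter.hasDaugavetSlices hG, HasDaugavetSlices.isDaugavetCenter hG⟩

theorem hasDaugavetSlices_iff_forall_lipSlice [Nontrivial X] (hG : ‖G‖ ≤ 1) :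
    HasDaugavetSlices G ↔ ∀ y : Y, ‖y‖ = 1 → ∀ f : X → ℝ, IsLip0 f → ∀ ε > (0 : ℝ),
      ∃ u ∈ LipSlice f ε, ‖G u + y‖ > 2 - ε := by
  refine ⟨fun h y hy f hf ε hε ↦ ?_, fun h y hy x' hx' ε hε ↦ ?_⟩
  · obtain ⟨⟨K, hK⟩, -⟩ := hf
    exact h.exists_mem_lipSlice hG hy hK hε
  obtain ⟨u, hu, hGu⟩ := h y hy x' ⟨⟨_, x'.lipschitz⟩, map_zero x'⟩ ε hε
  refine ⟨u, (norm_of_mem_lipSlice hu).le, ?_, hGu⟩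
  obtain ⟨p, q, hpq, rfl, hq⟩ := hu
  rw [x'.lipNorm_eq_opNorm, hx'] at hq
  simpa [div_eq_inv_mul] using hq

end Daugavet

theorem daugavet_center_iff_lip_slice_general
    {X Y : Type*} [NormedAddCommGroup X] [NormedSpace ℝ X]
    [NormedAddCommGroup Y] [NormedSpace ℝ Y]
    (G : X →L[ℝ] Y) (hG : ‖G‖ = 1) :
    IsDaugavetCenter G ↔
      ∀ y : Y, ‖y‖ = 1 → ∀ f : X → ℝ, IsLip0 f → ∀ ε > (0 : ℝ),
        ∃ u ∈ LipSlice f ε, ‖G u + y‖ > 2 - ε := by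
  obtain ⟨x, hx⟩ : ∃ x, G x ≠ 0 := by
    by_contra! h
    simp [show G = 0 from ContinuousLinearMap.ext h] at hG
  have : Nontrivial X := nontrivial_of_ne x 0 fun h ↦ hx (by simp [h])
  exact (isDaugavetCenter_iff_hasDaugavetSlices hG).trans
    (hasDaugavetSlices_iff_forall_lipSlice hG.le)

/-- A norm-one operator `G : X → Y` is a Daugavet center if and only if for
every `y ∈ S_Y`, every `f ∈ Lip₀(X,ℝ)` and every `ε > 0` there is `u ∈ S(f,ε)` with
`‖Gu + y‖ > 2 - ε`. -/
theorem daugavet_center_iff_lip_slice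
    {X Y : Type*} [NormedAddCommGroup X] [NormedSpace ℝ X] [CompleteSpace X]
    [NormedAddCommGroup Y] [NormedSpace ℝ Y] [CompleteSpace Y]
    (G : X →L[ℝ] Y) (hG : ‖G‖ = 1) :
    IsDaugavetCenter G ↔
      ∀ y : Y, ‖y‖ = 1 → ∀ f : X → ℝ, IsLip0 f → ∀ ε > (0 : ℝ),
        ∃ u ∈ LipSlice f ε, ‖G u + y‖ > 2 - ε :=
  daugavet_center_iff_lip_slice_general G hG

end
end

section
/- Let X and Y be real Banach spaces, let G : X → Y be a bounded linear operator which is a Daugavet center, and let T ∈ Lip₀(X,Y). Then there exist closed separable subspaces E of X and F of Y such that T(E) ⊆ F, G(E) ⊆ F, the restriction T|_E ∈ Lip₀(E,F) satisfies ‖T|_E‖_L = ‖T‖_L, the restriction G|_E : E → F satisfies ‖G|_E‖ = ‖G‖, and G|_E : E → F is a Daugavet center. -/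
/-!
A Daugavet center `G` is characterised by slices: for every unit vector `y` and `ε > 0`, the unit
ball of `X` is the closed convex hull of `{z ∈ B_X : ‖G z + ‖G‖ y‖ > 2‖G‖ - ε}`. Hahn–Banach
separation gives one direction, a norm estimate for `G + x* ⊗ y₀` at a point of such a slice the
other. For a single pair `(x, y)`, countably many points of the slices already have `x` in their
closed convex hull. Starting from countably many points almost attaining `‖G‖` and `‖T‖_L`, adjoin
alternately the images under `T` and `G` and the witnesses for a countable dense set of pairs,
each time taking the (separable) span. After countably many steps the closures `E` and `F`
satisfy the slice condition for `G|_E` on a dense set of pairs, hence everywhere, since the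
condition is closed in `(x, y)`.
-/

noncomputable section

open Set Metric TopologicalSpace Filter Topology

theorem exists_countable_subset_mem_closure_convexHull {E : Type*} [AddCommGroup E] [Module ℝ E]
    [PseudoMetricSpace E] {s : Set E} {x : E} (hx : x ∈ closure (convexHull ℝ s)) :
    ∃ t ⊆ s, t.Countable ∧ x ∈ closure (convexHull ℝ t) := by
  have (n : ℕ) : ∃ t : Finset E, ↑t ⊆ s ∧ ∃ w ∈ convexHull ℝ (t : Set E),
      dist x w < 1 / (n + 1) := by
    obtain ⟨w, hw, hxw⟩ := Metric.mem_closure_iff.mp hx _ Nat.one_div_pos_of_nat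
    rw [convexHull_eq_union_convexHull_finite_subsets, mem_iUnion₂] at hw
    obtain ⟨t, hts, hwt⟩ := hw
    exact ⟨t, hts, w, hwt, hxw⟩
  choose t hts w hw hxw using this
  refine ⟨⋃ n, (t n : Set E), iUnion_subset hts,
    countable_iUnion fun n => (t n).countable_toSet, Metric.mem_closure_iff.mpr fun ε hε => ?_⟩
  obtain ⟨n, hn⟩ := exists_nat_one_div_lt hε
  exact ⟨w n, convexHull_mono (subset_iUnion (fun n => (t n : Set E)) n) (hw n), (hxw n).trans hn⟩

theorem Submodule.mem_closure_convexHull_iff {M : Type*} [AddCommMonoid M] [Module ℝ M]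
    [TopologicalSpace M] {E : Submodule ℝ M} {s : Set E} {x : E} :
    x ∈ closure (convexHull ℝ s) ↔ (x : M) ∈ closure (convexHull ℝ (Subtype.val '' s)) := by
  rw [IsInducing.subtypeVal.closure_eq_preimage_closure_image, ← E.coe_subtype,
    ← LinearMap.image_convexHull]
  rfl

section

variable {X Y : Type*} [NormedAddCommGroup X] [NormedSpace ℝ X]
  [NormedAddCommGroup Y] [NormedSpace ℝ Y]

theorem ContinuousLinearMap.exists_lt_norm_apply_nonneg (S : X →L[ℝ] Y) (f : X →L[ℝ] ℝ)
    {b : ℝ} (hb : b < ‖S‖) : ∃ z : X, ‖z‖ ≤ 1 ∧ 0 ≤ f z ∧ b < ‖S z‖ := by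
  obtain ⟨z, hz, hbz⟩ := S.exists_lt_apply_of_lt_opNorm hb
  rcases le_total 0 (f z) with hfz | hfz
  · exact ⟨z, hz.le, hfz, hbz⟩
  · exact ⟨-z, by simpa using hz.le, by simpa using hfz, by simpa using hbz⟩

theorem ContinuousLinearMap.exists_lt_apply (f : X →L[ℝ] ℝ) {b : ℝ} (hb : b < ‖f‖) :
    ∃ z : X, ‖z‖ ≤ 1 ∧ b < f z := by
  obtain ⟨z, hz, hfz, hbz⟩ := f.exists_lt_norm_apply_nonneg f hb
  exact ⟨z, hz, by rwa [Real.norm_of_nonneg hfz] at hbz⟩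

theorem le_norm_add_smul {u y : Y} {g s M η : ℝ} (hu : ‖u‖ ≤ g) (hy : ‖y‖ = 1) (hM : 1 ≤ M)
    (hs : s ≤ M * g) (hη : 0 ≤ η) (h : 2 * g - η < ‖u + g • y‖) :
    g + s - M * η ≤ ‖u + s • y‖ := by
  rcases le_or_gt s g with hsg | hgs
  · have : ‖u + g • y‖ ≤ ‖u + s • y‖ + (g - s) :=
      calc ‖u + g • y‖ = ‖(u + s • y) + (g - s) • y‖ := by congr 1; module
        _ ≤ ‖u + s • y‖ + ‖(g - s) • y‖ := norm_add_le _ _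
        _ = ‖u + s • y‖ + (g - s) := by
          rw [norm_smul, hy, mul_one, Real.norm_of_nonneg (by linarith)]
    nlinarith
  · have hg : 0 < g := by by_contra! hg; nlinarith [norm_nonneg u]
    set t := s / g
    have hts : t * g = s := div_mul_cancel₀ s hg.ne'
    have ht1 : 1 ≤ t := (one_le_div hg).mpr hgs.le
    have htM : t ≤ M := (div_le_iff₀ hg).mpr hs
    have hid : u + s • y = t • (u + g • y) - (t - 1) • u := by rw [← hts]; module
    calc g + s - M * η ≤ t * (2 * g - η) - (t - 1) * g := by nlinarith
      _ ≤ t * ‖u + g • y‖ - (t - 1) * ‖u‖ := by gcongr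
      _ = ‖t • (u + g • y)‖ - ‖(t - 1) • u‖ := by
        rw [norm_smul, norm_smul, Real.norm_of_nonneg (by linarith),
          Real.norm_of_nonneg (by linarith)]
      _ ≤ ‖u + s • y‖ := hid ▸ norm_sub_norm_le _ _

def daugavetSet (G : X →L[ℝ] Y) (y : Y) (ε : ℝ) : Set X :=
  {z | ‖z‖ ≤ 1 ∧ 2 * ‖G‖ - ε < ‖G z + ‖G‖ • y‖}

theorem daugavetSet_mono (G : X →L[ℝ] Y) (y : Y) {ε ε' : ℝ} (h : ε ≤ ε') :
    daugavetSet G y ε ⊆ daugavetSet G y ε' :=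
  fun _ hz => ⟨hz.1, by linarith [hz.2]⟩

theorem daugavetSet_subset_of_norm_sub_le (G : X →L[ℝ] Y) {y y' : Y} {ε δ : ℝ}
    (h : ‖G‖ * ‖y - y'‖ ≤ δ) : daugavetSet G y ε ⊆ daugavetSet G y' (ε + δ) := by
  rintro z ⟨hz, hGz⟩
  refine ⟨hz, ?_⟩
  have : ‖G z + ‖G‖ • y‖ ≤ ‖G z + ‖G‖ • y'‖ + ‖G‖ * ‖y - y'‖ :=
    calc ‖G z + ‖G‖ • y‖ = ‖(G z + ‖G‖ • y') + ‖G‖ • (y - y')‖ := by congr 1; module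
      _ ≤ _ := by rw [← norm_norm G, ← norm_smul, norm_norm]; exact norm_add_le _ _
  linarith

theorem IsDaugavetCenter.exists_mem_daugavetSet_lt_apply {G : X →L[ℝ] Y}
    (hG : IsDaugavetCenter G) {y : Y} (hy : ‖y‖ = 1) {f : X →L[ℝ] ℝ} (hf : f ≠ 0) {η : ℝ}
    (hη : 0 < η) : ∃ z ∈ daugavetSet G y η, ‖f‖ - η < f z := by
  have hf0 : 0 < ‖f‖ := norm_pos_iff.mpr hf
  set g := ‖G‖
  -- with this `c`, the rank-one part forces `c * f z ≥ ‖G‖` at an almost norming point `z`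
  set c := max 1 ((g + η) / ‖f‖)
  have hc1 : 1 ≤ c := le_max_left _ _
  have hcf : g + η ≤ c * ‖f‖ := (div_le_iff₀ hf0).mp (le_max_right _ _)
  have hR : ‖f.smulRight (c • y)‖ = c * ‖f‖ := by
    rw [ContinuousLinearMap.norm_smulRight_apply, norm_smul, hy,
      Real.norm_of_nonneg (by linarith), mul_one, mul_comm]
  obtain ⟨z, hz, hfz, hlt⟩ := (G + f.smulRight (c • y)).exists_lt_norm_apply_nonneg f
    (b := g + c * ‖f‖ - η) (by rw [hG, hR]; linarith)
  set t := c * f z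
  have happ : (G + f.smulRight (c • y)) z = G z + t • y := by
    simp [t, smul_smul, mul_comm]
  rw [happ] at hlt
  have hfz1 : f z ≤ ‖f‖ := (Real.le_norm_self _).trans (f.unit_le_opNorm z hz)
  have ht : t ≤ c * ‖f‖ := mul_le_mul_of_nonneg_left hfz1 (by linarith)
  have hGz : ‖G z‖ ≤ g := G.unit_le_opNorm z hz
  have hty : ‖t • y‖ = t := by rw [norm_smul, hy, mul_one, Real.norm_of_nonneg (by positivity)]
  have htg : c * ‖f‖ - η < t := by linarith [norm_add_le (G z) (t • y)]
  have hsub : ‖G z + t • y‖ ≤ ‖G z + g • y‖ + (t - g) :=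
    calc ‖G z + t • y‖ = ‖(G z + g • y) + (t - g) • y‖ := by congr 1; module
      _ ≤ ‖G z + g • y‖ + ‖(t - g) • y‖ := norm_add_le _ _
      _ = ‖G z + g • y‖ + (t - g) := by
        rw [norm_smul, hy, mul_one, Real.norm_of_nonneg (by linarith)]
  refine ⟨z, ⟨hz, by linarith⟩, ?_⟩
  nlinarith

theorem IsDaugavetCenter.daugavetSet_nonempty {G : X →L[ℝ] Y} (hG : IsDaugavetCenter G)
    {y : Y} (hy : ‖y‖ = 1) {ε : ℝ} (hε : 0 < ε) : (daugavetSet G y ε).Nonempty := by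
  rcases subsingleton_or_nontrivial X with hX | hX
  · exact ⟨0, by simp, by simpa [G.opNorm_subsingleton] using hε⟩
  · obtain ⟨f, hf, -⟩ := exists_dual_vector' ℝ (0 : X)
    obtain ⟨z, hz, -⟩ := hG.exists_mem_daugavetSet_lt_apply hy (f := f)
      (by rintro rfl; simp at hf) hε
    exact ⟨z, hz⟩

theorem IsDaugavetCenter.closedBall_subset_closure_convexHull {G : X →L[ℝ] Y}
    (hG : IsDaugavetCenter G) {y : Y} (hy : ‖y‖ = 1) {ε : ℝ} (hε : 0 < ε) :
    closedBall (0 : X) 1 ⊆ closure (convexHull ℝ (daugavetSet G y ε)) := by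
  intro x hx
  by_contra hxA
  obtain ⟨f, u, hfA, hux⟩ := geometric_hahn_banach_closed_point
    (convex_convexHull ℝ _).closure isClosed_closure hxA
  have hfA' : ∀ a ∈ daugavetSet G y ε, f a < u :=
    fun a ha => hfA a (subset_closure (subset_convexHull ℝ _ ha))
  obtain ⟨a, ha⟩ := hG.daugavetSet_nonempty hy hε
  have hf : f ≠ 0 := by
    rintro rfl
    have := hfA' a ha
    simp only [zero_apply] at this hux
    linarith
  have hfx : f x ≤ ‖f‖ :=
    (Real.le_norm_self _).trans (f.unit_le_opNorm x (mem_closedBall_zero_iff.mp hx))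
  obtain ⟨z, hz, hfz⟩ := hG.exists_mem_daugavetSet_lt_apply hy hf
    (lt_min hε (sub_pos.mpr hux))
  linarith [hfA' z (daugavetSet_mono G y (min_le_left _ _) hz), min_le_right ε (f x - u)]

theorem exists_mem_lt_apply_of_closedBall_subset {A : Set X}
    (hA : closedBall (0 : X) 1 ⊆ closure (convexHull ℝ A)) (f : X →L[ℝ] ℝ) {η : ℝ}
    (hη : 0 < η) : ∃ z ∈ A, ‖f‖ - η < f z := by
  obtain ⟨x, hx, hfx⟩ := f.exists_lt_apply (show ‖f‖ - η < ‖f‖ by linarith)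
  by_contra! h
  have hhalf : closure (convexHull ℝ A) ⊆ {w | f w ≤ ‖f‖ - η} :=
    closure_minimal (convexHull_min h (convex_halfSpace_le f.toLinearMap.isLinear _))
      (isClosed_le f.continuous continuous_const)
  exact (hhalf (hA (mem_closedBall_zero_iff.mpr hx))).not_gt hfx

theorem isDaugavetCenter_of_exists_mem_daugavetSet {G : X →L[ℝ] Y}
    (h : ∀ y : Y, ‖y‖ = 1 → ∀ (f : X →L[ℝ] ℝ) (η : ℝ), 0 < η →
      ∃ z ∈ daugavetSet G y η, ‖f‖ - η < f z) :
    IsDaugavetCenter G := by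
  intro f y₀
  refine le_antisymm (norm_add_le _ _) ?_
  rw [ContinuousLinearMap.norm_smulRight_apply]
  rcases (norm_nonneg G).eq_or_lt with hG0 | hGpos
  · rw [← hG0, norm_eq_zero.mp hG0.symm, zero_add, zero_add,
      ContinuousLinearMap.norm_smulRight_apply]
  rcases eq_or_ne y₀ 0 with rfl | hy₀
  · simp
  set g := ‖G‖
  set M := max 1 (‖f‖ * ‖y₀‖ / g)
  have hM1 : 1 ≤ M := le_max_left _ _
  have hMg : ‖f‖ * ‖y₀‖ ≤ M * g := (div_le_iff₀ hGpos).mp (le_max_right _ _)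
  have hy₀pos : 0 < ‖y₀‖ := norm_pos_iff.mpr hy₀
  have key : ∀ η > 0, g + ‖f‖ * ‖y₀‖ - (M + ‖y₀‖) * η ≤ ‖G + f.smulRight y₀‖ := by
    intro η hη
    obtain ⟨z, ⟨hz, hGz⟩, hfz⟩ := h _ (norm_smul_inv_norm (𝕜 := ℝ) hy₀) f η hη
    have happ : (G + f.smulRight y₀) z = G z + (f z * ‖y₀‖) • (‖y₀‖⁻¹ • y₀) := by
      simp [smul_smul, mul_assoc, mul_inv_cancel₀ hy₀pos.ne']
    have hs : f z * ‖y₀‖ ≤ M * g :=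
      (mul_le_mul_of_nonneg_right ((Real.le_norm_self _).trans (f.unit_le_opNorm z hz))
        hy₀pos.le).trans hMg
    calc g + ‖f‖ * ‖y₀‖ - (M + ‖y₀‖) * η ≤ g + f z * ‖y₀‖ - M * η := by nlinarith
      _ ≤ ‖G z + (f z * ‖y₀‖) • (‖y₀‖⁻¹ • y₀)‖ :=
        le_norm_add_smul (G.unit_le_opNorm z hz) (norm_smul_inv_norm (𝕜 := ℝ) hy₀) hM1 hs hη.le hGz
      _ = ‖(G + f.smulRight y₀) z‖ := by rw [happ]
      _ ≤ ‖G + f.smulRight y₀‖ := (G + f.smulRight y₀).unit_le_opNorm z hz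
  refine le_of_forall_pos_le_add fun ε hε => ?_
  have := key (ε / (M + ‖y₀‖)) (by positivity)
  rw [mul_div_cancel₀ _ (by positivity)] at this
  linarith

theorem isDaugavetCenter_of_closedBall_subset {G : X →L[ℝ] Y}
    (h : ∀ y : Y, ‖y‖ = 1 → ∀ ε > 0,
      closedBall (0 : X) 1 ⊆ closure (convexHull ℝ (daugavetSet G y ε))) :
    IsDaugavetCenter G :=
  isDaugavetCenter_of_exists_mem_daugavetSet fun y hy f _ hη =>
    exists_mem_lt_apply_of_closedBall_subset (h y hy _ hη) f hη

theorem Submodule.closure_inter_closedBall_subset (U : Submodule ℝ X) :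
    closure (U : Set X) ∩ closedBall 0 1 ⊆ closure (U ∩ closedBall 0 1) := by
  rintro x ⟨hxU, hx⟩
  have hlim : Tendsto (fun t : ℝ => t • x) (𝓝[<] 1) (𝓝 x) := by
    simpa using ((tendsto_id (x := 𝓝[<] (1 : ℝ))).mono_right nhdsWithin_le_nhds).smul_const x
  rw [← closure_closure (s := (U : Set X) ∩ _)]
  refine mem_closure_of_tendsto hlim ?_
  filter_upwards [Ioo_mem_nhdsLT zero_lt_one] with t ⟨ht0, ht1⟩
  have htx : t • x ∈ ball (0 : X) 1 := by
    rw [mem_ball_zero_iff, norm_smul, Real.norm_of_nonneg ht0.le]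
    nlinarith [mem_closedBall_zero_iff.mp hx, norm_nonneg x]
  refine closure_mono (inter_subset_inter_right _ ball_subset_closedBall)
    (isOpen_ball.closure_inter ⟨?_, htx⟩)
  exact map_mem_closure (continuous_const_smul t) hxU fun u hu => U.smul_mem t hu

theorem Submodule.closure_inter_sphere_subset (U : Submodule ℝ X) :
    closure (U : Set X) ∩ sphere 0 1 ⊆ closure (U ∩ sphere 0 1) := by
  rintro y ⟨hyU, hy⟩
  have hy0 : y ≠ 0 := ne_zero_of_mem_unit_sphere ⟨y, hy⟩
  have hcont : ContinuousAt (fun u : X => ‖u‖⁻¹ • u) y :=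
    (continuous_norm.continuousAt.inv₀ (norm_ne_zero_iff.mpr hy0)).smul continuousAt_id
  have hy' : y ∈ closure ((U : Set X) ∩ {0}ᶜ) :=
    isOpen_compl_singleton.closure_inter ⟨hyU, hy0⟩
  have := hcont.continuousWithinAt.mem_closure_image hy'
  rw [mem_sphere_zero_iff_norm.mp hy, inv_one, one_smul] at this
  refine closure_mono ?_ this
  rintro _ ⟨u, ⟨huU, hu0⟩, rfl⟩
  exact ⟨U.smul_mem _ huU, by simpa using norm_smul_inv_norm (𝕜 := ℝ) hu0⟩

theorem IsDaugavetCenter.exists_countable_forall_mem_closure_convexHull {G : X →L[ℝ] Y}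
    (hG : IsDaugavetCenter G) {x : X} (hx : ‖x‖ ≤ 1) {y : Y} (hy : ‖y‖ = 1) :
    ∃ t : Set X, t.Countable ∧ ∀ ε > 0, x ∈ closure (convexHull ℝ (t ∩ daugavetSet G y ε)) := by
  have (n : ℕ) := exists_countable_subset_mem_closure_convexHull
    (hG.closedBall_subset_closure_convexHull hy (Nat.one_div_pos_of_nat (n := n))
      (mem_closedBall_zero_iff.mpr hx))
  choose t hts htc hxt using this
  refine ⟨⋃ n, t n, countable_iUnion htc, fun ε hε => ?_⟩
  obtain ⟨n, hn⟩ := exists_nat_one_div_lt hε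
  exact closure_mono (convexHull_mono
    (subset_inter (subset_iUnion t n) ((hts n).trans (daugavetSet_mono G y hn.le)))) (hxt n)

def daugavetHullPairs (G : X →L[ℝ] Y) (s : Set X) : Set (X × Y) :=
  {p | ∀ ε > 0, p.1 ∈ closure (convexHull ℝ (s ∩ daugavetSet G p.2 ε))}

theorem isClosed_daugavetHullPairs (G : X →L[ℝ] Y) (s : Set X) :
    IsClosed (daugavetHullPairs G s) := by
  refine isClosed_of_closure_subset fun p hp ε hε => ?_
  rw [← closure_closure, Metric.mem_closure_iff]
  intro ρ hρ
  obtain ⟨q, hq, hpq⟩ := Metric.mem_closure_iff.mp hp (min ρ (ε / 2 / (‖G‖ + 1))) (by positivity)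
  rw [Prod.dist_eq, max_lt_iff, lt_min_iff, lt_min_iff] at hpq
  have hd : ‖q.2 - p.2‖ < ε / 2 / (‖G‖ + 1) := by
    rw [← dist_eq_norm, dist_comm]
    exact hpq.2.2
  have hGd : ‖G‖ * ‖q.2 - p.2‖ ≤ ε / 2 := by
    rw [lt_div_iff₀ (by positivity)] at hd
    nlinarith [norm_nonneg G, norm_nonneg (q.2 - p.2)]
  have hslice : daugavetSet G q.2 (ε / 2) ⊆ daugavetSet G p.2 ε := by
    simpa using daugavetSet_subset_of_norm_sub_le G (ε := ε / 2) hGd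
  exact ⟨q.1, closure_mono (convexHull_mono (inter_subset_inter_right s hslice))
    (hq (ε / 2) (half_pos hε)), hpq.1.1⟩

theorem Submodule.exists_separable_le_subset_closure {α : Type*} [TopologicalSpace α]
    [PseudoMetrizableSpace α] {A : Submodule ℝ X} (hA : IsSeparable (A : Set X)) {S : Set α}
    (hS : IsSeparable S) {wit : α → Set X} (hwit : ∀ a, (wit a).Countable) :
    ∃ B : Submodule ℝ X, A ≤ B ∧ IsSeparable (B : Set X) ∧
      S ⊆ closure {a | a ∈ S ∧ wit a ⊆ B} := by
  obtain ⟨D, hDS, hDc, hSD⟩ := hS.exists_countable_dense_subset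
  refine ⟨Submodule.span ℝ (A ∪ ⋃ a ∈ D, wit a), fun x hx => Submodule.subset_span (Or.inl hx),
    (hA.union (hDc.biUnion fun a _ => hwit a).isSeparable).span,
    hSD.trans (closure_mono fun a ha => ⟨hDS ha, fun z hz => ?_⟩)⟩
  exact Submodule.subset_span (Or.inr (mem_biUnion ha hz))

theorem exists_separable_chain {Φ : Submodule ℝ X → Submodule ℝ Y}
    (hΦ : ∀ A : Submodule ℝ X, IsSeparable (A : Set X) → IsSeparable (Φ A : Set Y)) {W : Set X}
    (hW : W.Countable) {wit : X × Y → Set X} (hwit : ∀ p, (wit p).Countable)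
    (P : Set X) (Q : Set Y) :
    ∃ A : ℕ → Submodule ℝ X, Monotone A ∧ (∀ n, IsSeparable (A n : Set X)) ∧ W ⊆ A 0 ∧
      ∀ n, ((A n : Set X) ∩ P) ×ˢ ((Φ (A n) : Set Y) ∩ Q) ⊆
        closure {p | p ∈ P ×ˢ Q ∧ wit p ⊆ A (n + 1)} := by
  have step (A : {A : Submodule ℝ X // IsSeparable (A : Set X)}) :=
    A.1.exists_separable_le_subset_closure A.2 (S := ((A.1 : Set X) ∩ P) ×ˢ ((Φ A.1 : Set Y) ∩ Q))
      ((A.2.mono inter_subset_left).prod ((hΦ _ A.2).mono inter_subset_left)) hwit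
  choose next hle hsep hnext using step
  let succ (B : {A : Submodule ℝ X // IsSeparable (A : Set X)}) :
      {A : Submodule ℝ X // IsSeparable (A : Set X)} := ⟨next B, hsep B⟩
  let A₀ : {A : Submodule ℝ X // IsSeparable (A : Set X)} := ⟨_, hW.isSeparable.span⟩
  refine ⟨fun n => (succ^[n] A₀).1, monotone_nat_of_le_succ fun n => ?_,
    fun n => (succ^[n] A₀).2, Submodule.subset_span, fun n p hp => ?_⟩
  · simpa only [succ, Function.iterate_succ_apply'] using hle _
  · simp only [succ, Function.iterate_succ_apply']
    refine closure_mono ?_ (hnext _ hp)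
    exact fun q hq => ⟨⟨hq.1.1.2, hq.1.2.2⟩, hq.2⟩

theorem exists_separable_submodules_subset_closure {f g : X → Y} (hf : Continuous f)
    (hg : Continuous g) {W : Set X} (hW : W.Countable) {wit : X × Y → Set X}
    (hwit : ∀ p, (wit p).Countable) (P : Set X) (Q : Set Y) :
    ∃ (E : Submodule ℝ X) (F : Submodule ℝ Y), IsSeparable (E : Set X) ∧
      IsSeparable (F : Set Y) ∧ W ⊆ E ∧ MapsTo f E F ∧ MapsTo g E F ∧
      ((E : Set X) ∩ P) ×ˢ ((F : Set Y) ∩ Q) ⊆ closure {p | p ∈ P ×ˢ Q ∧ wit p ⊆ E} := by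
  let Φ : Submodule ℝ X → Submodule ℝ Y := fun A => Submodule.span ℝ (f '' A ∪ g '' A)
  have hΦ : Monotone Φ := fun A B h =>
    Submodule.span_mono (union_subset_union (image_mono h) (image_mono h))
  have hΦsep (A : Submodule ℝ X) (hA : IsSeparable (A : Set X)) : IsSeparable (Φ A : Set Y) :=
    ((hA.image hf).union (hA.image hg)).span
  obtain ⟨A, hA, hAsep, hWA, hAwit⟩ := exists_separable_chain hΦsep hW hwit P Q
  have hE : ((⨆ n, A n : Submodule ℝ X) : Set X) = ⋃ n, (A n : Set X) :=
    Submodule.coe_iSup_of_directed A hA.directed_le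
  have hF : ((⨆ n, Φ (A n) : Submodule ℝ Y) : Set Y) = ⋃ n, (Φ (A n) : Set Y) :=
    Submodule.coe_iSup_of_directed _ (hΦ.comp hA).directed_le
  have hmaps {h : X → Y} (hh : ∀ B : Submodule ℝ X, MapsTo h B (Φ B)) :
      MapsTo h (⨆ n, A n : Submodule ℝ X) (⨆ n, Φ (A n) : Submodule ℝ Y) := by
    rw [hE, hF]
    exact fun x hx => let ⟨n, hxn⟩ := mem_iUnion.mp hx; mem_iUnion.mpr ⟨n, hh _ hxn⟩
  refine ⟨⨆ n, A n, ⨆ n, Φ (A n), hE ▸ .iUnion hAsep, hF ▸ .iUnion fun n => hΦsep _ (hAsep n),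
    hWA.trans (le_iSup A 0), hmaps fun _ x hx => Submodule.subset_span (Or.inl ⟨x, hx, rfl⟩),
    hmaps fun _ x hx => Submodule.subset_span (Or.inr ⟨x, hx, rfl⟩), ?_⟩
  rintro ⟨x, y⟩ ⟨⟨hxE, hxP⟩, hyF, hyQ⟩
  obtain ⟨i, hi⟩ := mem_iUnion.mp (hE ▸ hxE)
  obtain ⟨j, hj⟩ := mem_iUnion.mp (hF ▸ hyF)
  refine closure_mono ?_
    (hAwit _ ⟨⟨hA (le_max_left i j) hi, hxP⟩, hΦ (hA (le_max_right i j)) hj, hyQ⟩)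
  exact fun p hp => ⟨hp.1, hp.2.trans (le_iSup A (max i j + 1))⟩

theorem IsDaugavetCenter.exists_separable_submodules {G : X →L[ℝ] Y} (hG : IsDaugavetCenter G)
    {T : X → Y} (hT : Continuous T) {W : Set X} (hW : W.Countable) :
    ∃ (E : Submodule ℝ X) (F : Submodule ℝ Y), IsSeparable (E : Set X) ∧
      IsSeparable (F : Set Y) ∧ W ⊆ E ∧ MapsTo T E F ∧ MapsTo G E F ∧
      (closure (E : Set X) ∩ closedBall 0 1) ×ˢ (closure (F : Set Y) ∩ sphere 0 1) ⊆
        daugavetHullPairs G (closure E) := by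
  have (p : X × Y) : ∃ t : Set X, t.Countable ∧ (p ∈ closedBall 0 1 ×ˢ sphere 0 1 →
      ∀ ε > 0, p.1 ∈ closure (convexHull ℝ (t ∩ daugavetSet G p.2 ε))) := by
    by_cases hp : p ∈ closedBall (0 : X) 1 ×ˢ sphere (0 : Y) 1
    · obtain ⟨t, ht, hpt⟩ := hG.exists_countable_forall_mem_closure_convexHull
        (mem_closedBall_zero_iff.mp hp.1) (mem_sphere_zero_iff_norm.mp hp.2)
      exact ⟨t, ht, fun _ => hpt⟩
    · exact ⟨∅, countable_empty, fun h => absurd h hp⟩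
  choose wit hwitc hwit using this
  obtain ⟨E, F, hE, hF, hWE, hTEF, hGEF, hdense⟩ := exists_separable_submodules_subset_closure
    hT G.continuous hW hwitc (closedBall 0 1) (sphere 0 1)
  refine ⟨E, F, hE, hF, hWE, hTEF, hGEF, ?_⟩
  have hwitE : {p | p ∈ closedBall 0 1 ×ˢ sphere 0 1 ∧ wit p ⊆ E} ⊆
      daugavetHullPairs G (closure E) := fun p hp ε hε =>
    closure_mono (convexHull_mono (inter_subset_inter_left _ (hp.2.trans subset_closure)))
      (hwit p hp.1 ε hε)
  calc (closure (E : Set X) ∩ closedBall 0 1) ×ˢ (closure (F : Set Y) ∩ sphere 0 1)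
      ⊆ closure ((E : Set X) ∩ closedBall 0 1) ×ˢ closure ((F : Set Y) ∩ sphere 0 1) :=
        prod_mono E.closure_inter_closedBall_subset F.closure_inter_sphere_subset
    _ = closure (((E : Set X) ∩ closedBall 0 1) ×ˢ ((F : Set Y) ∩ sphere 0 1)) :=
        closure_prod_eq.symm
    _ ⊆ daugavetHullPairs G (closure E) :=
        closure_minimal (hdense.trans (closure_minimal hwitE (isClosed_daugavetHullPairs G _)))
          (isClosed_daugavetHullPairs G _)

theorem image_coe_daugavetSet_codRestrict {G : X →L[ℝ] Y} {E : Submodule ℝ X}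
    {F : Submodule ℝ Y} (h : ∀ e : E, G e ∈ F)
    (hnorm : ‖(G.comp E.subtypeL).codRestrict F h‖ = ‖G‖) (y : F) (ε : ℝ) :
    Subtype.val '' daugavetSet ((G.comp E.subtypeL).codRestrict F h) y ε =
      (E : Set X) ∩ daugavetSet G y ε := by
  ext x
  simp only [daugavetSet, hnorm, mem_image, mem_inter_iff, mem_ofPred_eq]
  constructor
  · rintro ⟨e, he, rfl⟩
    exact ⟨e.2, he⟩
  · rintro ⟨hx, he⟩
    exact ⟨⟨x, hx⟩, he, rfl⟩

theorem isDaugavetCenter_codRestrict {G : X →L[ℝ] Y} {E : Submodule ℝ X} {F : Submodule ℝ Y}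
    (h : ∀ e : E, G e ∈ F) (hnorm : ‖(G.comp E.subtypeL).codRestrict F h‖ = ‖G‖)
    (hhull : ((E : Set X) ∩ closedBall 0 1) ×ˢ ((F : Set Y) ∩ sphere 0 1) ⊆
      daugavetHullPairs G E) :
    IsDaugavetCenter ((G.comp E.subtypeL).codRestrict F h) := by
  refine isDaugavetCenter_of_closedBall_subset fun y hy ε hε x hx => ?_
  rw [Submodule.mem_closure_convexHull_iff, image_coe_daugavetSet_codRestrict h hnorm]
  have hx' : (x : X) ∈ closedBall (0 : X) 1 :=
    mem_closedBall_zero_iff.mpr (mem_closedBall_zero_iff.mp hx)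
  have hy' : (y : Y) ∈ sphere (0 : Y) 1 := mem_sphere_zero_iff_norm.mpr hy
  have hxy : ((x : X), (y : Y)) ∈ daugavetHullPairs G E := hhull ⟨⟨x.2, hx'⟩, y.2, hy'⟩
  exact hxy ε hε

theorem ContinuousLinearMap.exists_countable_norm_codRestrict_eq (G : X →L[ℝ] Y) :
    ∃ W : Set X, W.Countable ∧ ∀ (E : Submodule ℝ X) (F : Submodule ℝ Y)
      (h : ∀ e : E, G e ∈ F), W ⊆ E → ‖(G.comp E.subtypeL).codRestrict F h‖ = ‖G‖ := by
  obtain ⟨u, -, hu, hlim⟩ := exists_seq_strictMono_tendsto ‖G‖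
  choose w hw1 hw using fun n => G.exists_lt_apply_of_lt_opNorm (hu n)
  refine ⟨range w, countable_range w, fun E F h hWE => le_antisymm ?_ ?_⟩
  · exact ContinuousLinearMap.opNorm_le_bound _ (norm_nonneg G) fun e => G.le_opNorm e
  · exact le_of_tendsto' hlim fun n => (hw n).le.trans
      (((G.comp E.subtypeL).codRestrict F h).unit_le_opNorm ⟨w n, hWE ⟨n, rfl⟩⟩ (hw1 n).le)

theorem LipschitzWith.exists_countable_lipNorm_restrict_eq {K : NNReal} {T : X → Y}
    (hT : LipschitzWith K T) :
    ∃ W : Set X, W.Countable ∧ ∀ (E : Submodule ℝ X) (F : Submodule ℝ Y)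
      (h : ∀ e : E, T e ∈ F), W ⊆ E → LipNorm (fun e : E => (⟨T e, h e⟩ : F)) = LipNorm T := by
  set S := {r : ℝ | ∃ x y : X, x ≠ y ∧ r = ‖T x - T y‖ / ‖x - y‖}
  have hS : BddAbove S := ⟨K, by
    rintro _ ⟨x, y, -, rfl⟩
    exact div_le_of_le_mul₀ (norm_nonneg _) K.coe_nonneg
      (by simpa only [dist_eq_norm] using hT.dist_le_mul x y)⟩
  have hsub (E : Submodule ℝ X) (F : Submodule ℝ Y) (h : ∀ e : E, T e ∈ F) :
      {r : ℝ | ∃ x y : E, x ≠ y ∧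
        r = ‖(⟨T x, h x⟩ : F) - ⟨T y, h y⟩‖ / ‖x - y‖} ⊆ S := by
    rintro _ ⟨x, y, hxy, rfl⟩
    exact ⟨x, y, fun h' => hxy (Subtype.ext h'), rfl⟩
  rcases S.eq_empty_or_nonempty with hS0 | hSne
  · refine ⟨∅, countable_empty, fun E F h _ => ?_⟩
    unfold LipNorm
    rw [subset_empty_iff.mp ((hsub E F h).trans hS0.subset)]
    exact congrArg sSup hS0.symm
  obtain ⟨u, -, hu, hlim⟩ := exists_seq_strictMono_tendsto (sSup S)
  choose r hrS hur using fun n => exists_lt_of_lt_csSup hSne (hu n)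
  choose a b hab hr using hrS
  refine ⟨range a ∪ range b, (countable_range a).union (countable_range b),
    fun E F h hWE => ?_⟩
  have hmem (n : ℕ) : r n ∈ {r : ℝ | ∃ x y : E, x ≠ y ∧
      r = ‖(⟨T x, h x⟩ : F) - ⟨T y, h y⟩‖ / ‖x - y‖} :=
    ⟨⟨a n, hWE (Or.inl ⟨n, rfl⟩)⟩, ⟨b n, hWE (Or.inr ⟨n, rfl⟩)⟩,
      fun h' => hab n (congrArg Subtype.val h'), hr n⟩
  exact le_antisymm (csSup_le_csSup hS ⟨_, hmem 0⟩ (hsub E F h))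
    (le_of_tendsto' hlim fun n => (hur n).le.trans (le_csSup (hS.mono (hsub E F h)) (hmem n)))

end

theorem daugavet_center_separable_reduction_general
    {X Y : Type*} [NormedAddCommGroup X] [NormedSpace ℝ X]
    [NormedAddCommGroup Y] [NormedSpace ℝ Y]
    (G : X →L[ℝ] Y) (hG : IsDaugavetCenter G) (T : X → Y) (hT : IsLip0 T) :
    ∃ (E : Submodule ℝ X) (F : Submodule ℝ Y)
      (hTEF : ∀ e : E, T e ∈ F) (hGEF : ∀ e : E, G e ∈ F),
      IsClosed (E : Set X) ∧ IsClosed (F : Set Y) ∧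
      TopologicalSpace.IsSeparable (E : Set X) ∧ TopologicalSpace.IsSeparable (F : Set Y) ∧
      LipNorm (fun e : E => (⟨T e, hTEF e⟩ : F)) = LipNorm T ∧
      ‖(G.comp E.subtypeL).codRestrict F (fun e => hGEF e)‖ = ‖G‖ ∧
      IsDaugavetCenter ((G.comp E.subtypeL).codRestrict F (fun e => hGEF e)) := by
  obtain ⟨⟨K, hK⟩, -⟩ := hT
  obtain ⟨W₁, hW₁, hGW₁⟩ := G.exists_countable_norm_codRestrict_eq
  obtain ⟨W₂, hW₂, hTW₂⟩ := hK.exists_countable_lipNorm_restrict_eq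
  obtain ⟨E₀, F₀, hE₀, hF₀, hWE₀, hTE₀, hGE₀, hhull⟩ :=
    hG.exists_separable_submodules hK.continuous (hW₁.union hW₂)
  set E := E₀.topologicalClosure
  set F := F₀.topologicalClosure
  have hTEF (e : E) : T e ∈ F := map_mem_closure hK.continuous e.2 hTE₀
  have hGEF (e : E) : G e ∈ F := map_mem_closure G.continuous e.2 hGE₀
  have hWE : W₁ ∪ W₂ ⊆ E := hWE₀.trans E₀.le_topologicalClosure
  have hnorm := hGW₁ E F hGEF (subset_union_left.trans hWE)
  exact ⟨E, F, hTEF, hGEF, E₀.isClosed_topologicalClosure, F₀.isClosed_topologicalClosure,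
    hE₀.closure, hF₀.closure, hTW₂ E F hTEF (subset_union_right.trans hWE), hnorm,
    isDaugavetCenter_codRestrict hGEF hnorm hhull⟩

/-- If `G : X → Y` is a Daugavet center and `T ∈ Lip₀(X,Y)`, then there are
closed separable subspaces `E ⊆ X` and `F ⊆ Y` with `T(E) ⊆ F` and `G(E) ⊆ F` such that
`‖T|_E‖_L = ‖T‖_L`, `‖G|_E‖ = ‖G‖`, and `G|_E : E → F` is a Daugavet center. -/
theorem daugavet_center_separable_reduction
    {X Y : Type*} [NormedAddCommGroup X] [NormedSpace ℝ X] [CompleteSpace X]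
    [NormedAddCommGroup Y] [NormedSpace ℝ Y] [CompleteSpace Y]
    (G : X →L[ℝ] Y) (hG : IsDaugavetCenter G) (T : X → Y) (hT : IsLip0 T) :
    ∃ (E : Submodule ℝ X) (F : Submodule ℝ Y)
      (hTEF : ∀ e : E, T e ∈ F) (hGEF : ∀ e : E, G e ∈ F),
      IsClosed (E : Set X) ∧ IsClosed (F : Set Y) ∧
      TopologicalSpace.IsSeparable (E : Set X) ∧ TopologicalSpace.IsSeparable (F : Set Y) ∧
      LipNorm (fun e : E => (⟨T e, hTEF e⟩ : F)) = LipNorm T ∧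
      ‖(G.comp E.subtypeL).codRestrict F (fun e => hGEF e)‖ = ‖G‖ ∧
      IsDaugavetCenter ((G.comp E.subtypeL).codRestrict F (fun e => hGEF e)) :=
  daugavet_center_separable_reduction_general G hG T hT

end
end

section
/- Let X be a real Banach space, (I, ≤) a nonempty directed set, and (X_i)_{i ∈ I} a family of closed subspaces of X such that X_i ⊆ X_j whenever i ≤ j, each X_i is one-complemented in X (i.e., there exists a bounded linear projection P_i : X → X with range X_i and ‖P_i‖ = 1), and the union ⋃_{i ∈ I} X_i is dense in X. Then n_L(X) ≥ limsup_{i ∈ I} n_L(X_i), where the upper limit is taken along the directed set I. -/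
/-!
Fix `T ∈ Lip₀(X, X)` with `‖T‖_L = 1`. Its Lipschitz norm is almost attained at a pair of points
of the dense set `⋃ X_i`, and the difference of their images is almost in `⋃ X_i` as well; for
all large `i` these three points lie in `X_i`. If `P_i` is a norm-one projection onto `X_i`, the
compression `S_i = P_i T|_{X_i}` then has `‖S_i‖_L ≥ 1 - ε`, while `ν_L(S_i) ≤ ν_L(T)` because every
`f ∈ D(u - v)` on `X_i` extends to `f ∘ P_i ∈ D(u - v)` on `X`. Normalising `S_i` gives
`n_L(X_i) ≤ ν_L(T) / (1 - ε)` for all large `i`.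
-/

noncomputable section

open Filter Topology
open scoped NNReal Pointwise

section LipNorm

variable {Z W : Type*} [NormedAddCommGroup Z] [NormedAddCommGroup W]

theorem IsLip0.continuous {T : Z → W} (hT : IsLip0 T) : Continuous T :=
  hT.1.elim fun _ hK => hK.continuous

theorem le_lipNorm {T : Z → W} {K : ℝ≥0} (hT : LipschitzWith K T) {x y : Z} (hxy : x ≠ y) :
    ‖T x - T y‖ / ‖x - y‖ ≤ LipNorm T := by
  refine le_csSup ⟨K, ?_⟩ ⟨x, y, hxy, rfl⟩
  rintro _ ⟨a, b, hab, rfl⟩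
  rw [div_le_iff₀ (norm_pos_iff.2 (sub_ne_zero.2 hab)), ← dist_eq_norm, ← dist_eq_norm]
  exact hT.dist_le_mul a b

theorem lipNorm_of_subsingleton [Subsingleton Z] (T : Z → W) : LipNorm T = 0 := by
  have : {q : ℝ | ∃ x y : Z, x ≠ y ∧ q = ‖T x - T y‖ / ‖x - y‖} = ∅ :=
    Set.eq_empty_of_forall_notMem fun _ ⟨x, y, hxy, _⟩ => hxy (Subsingleton.elim x y)
  rw [LipNorm, this, Real.sSup_empty]

theorem lipNorm_id [Nontrivial Z] : LipNorm (id : Z → Z) = 1 := by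
  have : {q : ℝ | ∃ x y : Z, x ≠ y ∧ q = ‖id x - id y‖ / ‖x - y‖} = {1} := by
    ext q
    constructor
    · rintro ⟨x, y, hxy, rfl⟩
      exact div_self (norm_ne_zero_iff.2 (sub_ne_zero.2 hxy))
    · rintro rfl
      obtain ⟨x, y, hxy⟩ := exists_pair_ne Z
      exact ⟨x, y, hxy, (div_self (norm_ne_zero_iff.2 (sub_ne_zero.2 hxy))).symm⟩
  rw [LipNorm, this, csSup_singleton]

theorem lipNorm_const_smul [NormedSpace ℝ W] {c : ℝ} (hc : 0 ≤ c) (T : Z → W) :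
    LipNorm (fun z => c • T z) = c * LipNorm T := by
  have hquot (x y : Z) : ‖c • T x - c • T y‖ / ‖x - y‖ = c * (‖T x - T y‖ / ‖x - y‖) := by
    rw [← smul_sub, norm_smul, Real.norm_of_nonneg hc, mul_div_assoc]
  have : {q : ℝ | ∃ x y : Z, x ≠ y ∧ q = ‖c • T x - c • T y‖ / ‖x - y‖} =
      c • {q : ℝ | ∃ x y : Z, x ≠ y ∧ q = ‖T x - T y‖ / ‖x - y‖} := by
    ext q
    simp only [Set.mem_smul_set, Set.mem_ofPred_eq, smul_eq_mul]
    constructor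
    · rintro ⟨x, y, hxy, rfl⟩
      exact ⟨_, ⟨x, y, hxy, rfl⟩, (hquot x y).symm⟩
    · rintro ⟨_, ⟨x, y, hxy, rfl⟩, rfl⟩
      exact ⟨x, y, hxy, (hquot x y).symm⟩
  rw [LipNorm, LipNorm, this, Real.sSup_smul_of_nonneg hc, smul_eq_mul]

theorem exists_lt_div_of_lt_lipNorm_of_dense {T : Z → W} (hT : Continuous T) {s : Set Z}
    (hs : Dense s) {r : ℝ} (hr : 0 ≤ r) (h : r < LipNorm T) :
    ∃ x ∈ s, ∃ y ∈ s, x ≠ y ∧ r < ‖T x - T y‖ / ‖x - y‖ := by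
  have hne : {q : ℝ | ∃ x y : Z, x ≠ y ∧ q = ‖T x - T y‖ / ‖x - y‖}.Nonempty := by
    by_contra hempty
    rw [Set.not_nonempty_iff_eq_empty] at hempty
    rw [LipNorm, hempty, Real.sSup_empty] at h
    linarith
  obtain ⟨_, ⟨x, y, hxy, rfl⟩, hlt⟩ := exists_lt_of_lt_csSup hne h
  have hcont : ContinuousOn (fun p : Z × Z => ‖T p.1 - T p.2‖ / ‖p.1 - p.2‖)
      {p | p.1 ≠ p.2} :=
    ContinuousOn.div (by fun_prop) (by fun_prop) fun p hp => norm_ne_zero_iff.2 (sub_ne_zero.2 hp)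
  have hopen := hcont.isOpen_inter_preimage (isOpen_ne_fun continuous_fst continuous_snd)
    (isOpen_Ioi (a := r))
  obtain ⟨⟨x', y'⟩, ⟨hx'y', hlt'⟩, hx', hy'⟩ :=
    (hs.prod hs).inter_open_nonempty _ hopen ⟨(x, y), hxy, hlt⟩
  exact ⟨x', hx', y', hy', hx'y', hlt'⟩

end LipNorm

section NumericalRadius

variable {𝕜 Z : Type*} [RCLike 𝕜] [NormedAddCommGroup Z] [NormedSpace 𝕜 Z]

theorem norm_eq_of_mem_Dset_s17 {x : Z} (hx : x ≠ 0) {f : Z →L[𝕜] 𝕜} (hf : f ∈ Dset 𝕜 x) :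
    ‖f‖ = ‖x‖ :=
  mul_right_cancel₀ (norm_ne_zero_iff.2 hx) (hf.2.trans (sq ‖x‖))

theorem nuL_nonneg (T : Z → Z) : 0 ≤ nuL 𝕜 T :=
  Real.sSup_nonneg fun _ ⟨_, _, _, _, _, hr⟩ => hr ▸ by positivity

theorem le_nuL {T : Z → Z} {K : ℝ≥0} (hT : LipschitzWith K T) {x y : Z} (hxy : x ≠ y)
    {f : Z →L[𝕜] 𝕜} (hf : f ∈ Dset 𝕜 (x - y)) :
    ‖f (T x - T y)‖ / ‖x - y‖ ^ 2 ≤ nuL 𝕜 T := by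
  refine le_csSup ⟨K, ?_⟩ ⟨x, y, f, hxy, hf, rfl⟩
  rintro _ ⟨a, b, g, hab, hg, rfl⟩
  have hpos : 0 < ‖a - b‖ := norm_pos_iff.2 (sub_ne_zero.2 hab)
  rw [div_le_iff₀ (by positivity)]
  calc ‖g (T a - T b)‖ ≤ ‖g‖ * ‖T a - T b‖ := g.le_opNorm _
    _ ≤ ‖a - b‖ * (K * ‖a - b‖) := by
        rw [norm_eq_of_mem_Dset_s17 (sub_ne_zero.2 hab) hg, ← dist_eq_norm, ← dist_eq_norm]
        exact mul_le_mul_of_nonneg_left (hT.dist_le_mul a b) dist_nonneg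
    _ = K * ‖a - b‖ ^ 2 := by ring

theorem nuL_le {T : Z → Z} {a : ℝ} (ha : 0 ≤ a)
    (h : ∀ (x y : Z) (f : Z →L[𝕜] 𝕜), x ≠ y → f ∈ Dset 𝕜 (x - y) →
      ‖f (T x - T y)‖ / ‖x - y‖ ^ 2 ≤ a) :
    nuL 𝕜 T ≤ a :=
  Real.sSup_le (fun _ ⟨x, y, f, hxy, hf, hr⟩ => hr ▸ h x y f hxy hf) ha

theorem nL_nonneg : 0 ≤ nL 𝕜 Z :=
  Real.sInf_nonneg fun _ ⟨T, _, _, hr⟩ => hr ▸ nuL_nonneg T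

theorem nL_le_nuL {T : Z → Z} (hT : IsLip0 T) (hT1 : LipNorm T = 1) : nL 𝕜 Z ≤ nuL 𝕜 T :=
  csInf_le ⟨0, fun _ ⟨S, _, _, hr⟩ => hr ▸ nuL_nonneg S⟩ ⟨T, hT, hT1, rfl⟩

theorem le_nL [Nontrivial Z] {a : ℝ} (h : ∀ T : Z → Z, IsLip0 T → LipNorm T = 1 → a ≤ nuL 𝕜 T) :
    a ≤ nL 𝕜 Z :=
  le_csInf ⟨_, id, ⟨⟨1, LipschitzWith.id⟩, rfl⟩, lipNorm_id, rfl⟩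
    fun _ ⟨T, hT, hT1, hr⟩ => hr ▸ h T hT hT1

theorem nL_of_subsingleton [Subsingleton Z] : nL 𝕜 Z = 0 := by
  have : {r : ℝ | ∃ T : Z → Z, IsLip0 T ∧ LipNorm T = 1 ∧ r = nuL 𝕜 T} = ∅ :=
    Set.eq_empty_of_forall_notMem fun _ ⟨T, _, hT1, _⟩ =>
      zero_ne_one ((lipNorm_of_subsingleton T).symm.trans hT1)
  rw [nL, this, Real.sInf_empty]

theorem comp_mem_Dset {F : Type*} [NormedAddCommGroup F] [NormedSpace 𝕜 F] {Q : Z →L[𝕜] F}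
    (hQ : ‖Q‖ ≤ 1) {e : Z} (he : ‖Q e‖ = ‖e‖) {f : F →L[𝕜] 𝕜} (hf : f ∈ Dset 𝕜 (Q e)) :
    f.comp Q ∈ Dset 𝕜 e := by
  obtain ⟨hfe, hfn⟩ := hf
  rw [he] at hfe hfn
  refine ⟨hfe, le_antisymm ?_ ?_⟩
  · calc ‖f.comp Q‖ * ‖e‖ ≤ ‖f‖ * ‖e‖ := by
          gcongr
          exact (f.opNorm_comp_le Q).trans (mul_le_of_le_one_right (norm_nonneg f) hQ)
      _ = ‖e‖ ^ 2 := hfn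
  · calc ‖e‖ ^ 2 = ‖(f.comp Q) e‖ := by
          rw [ContinuousLinearMap.comp_apply, hfe, RCLike.norm_ofReal,
            abs_of_nonneg (by positivity)]
      _ ≤ ‖f.comp Q‖ * ‖e‖ := (f.comp Q).le_opNorm e

end NumericalRadius

theorem nuL_const_smul {Z : Type*} [NormedAddCommGroup Z] [NormedSpace ℝ Z] {c : ℝ} (hc : 0 ≤ c)
    (T : Z → Z) : nuL ℝ (fun z => c • T z) = c * nuL ℝ T := by
  have hquot (x y : Z) (f : Z →L[ℝ] ℝ) :
      ‖f (c • T x - c • T y)‖ / ‖x - y‖ ^ 2 = c * (‖f (T x - T y)‖ / ‖x - y‖ ^ 2) := by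
    rw [← smul_sub, map_smul, smul_eq_mul, norm_mul, Real.norm_of_nonneg hc, mul_div_assoc]
  have : {r : ℝ | ∃ (x y : Z) (f : Z →L[ℝ] ℝ), x ≠ y ∧ f ∈ Dset ℝ (x - y) ∧
        r = ‖f (c • T x - c • T y)‖ / ‖x - y‖ ^ 2} =
      c • {r : ℝ | ∃ (x y : Z) (f : Z →L[ℝ] ℝ), x ≠ y ∧ f ∈ Dset ℝ (x - y) ∧
        r = ‖f (T x - T y)‖ / ‖x - y‖ ^ 2} := by
    ext r
    simp only [Set.mem_smul_set, Set.mem_ofPred_eq, smul_eq_mul]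
    constructor
    · rintro ⟨x, y, f, hxy, hf, rfl⟩
      exact ⟨_, ⟨x, y, f, hxy, hf, rfl⟩, (hquot x y f).symm⟩
    · rintro ⟨_, ⟨x, y, f, hxy, hf, rfl⟩, rfl⟩
      exact ⟨x, y, f, hxy, hf, (hquot x y f).symm⟩
  rw [nuL, nuL, this, Real.sSup_smul_of_nonneg hc, smul_eq_mul]

theorem nL_le_nuL_div_lipNorm {Z : Type*} [NormedAddCommGroup Z] [NormedSpace ℝ Z] {S : Z → Z}
    (hS : IsLip0 S) (hSpos : 0 < LipNorm S) : nL ℝ Z ≤ nuL ℝ S / LipNorm S := by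
  obtain ⟨⟨K, hK⟩, hS0⟩ := hS
  have hc : 0 ≤ (LipNorm S)⁻¹ := inv_nonneg.2 hSpos.le
  have hnormalized : IsLip0 fun z => (LipNorm S)⁻¹ • S z :=
    ⟨⟨_, (lipschitzWith_smul (LipNorm S)⁻¹).comp hK⟩, by simp [hS0]⟩
  have hnorm1 : LipNorm (fun z => (LipNorm S)⁻¹ • S z) = 1 := by
    rw [lipNorm_const_smul hc, inv_mul_cancel₀ hSpos.ne']
  rw [div_eq_inv_mul, ← nuL_const_smul hc]
  exact nL_le_nuL hnormalized hnorm1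

section Compression

variable {𝕜 E F : Type*} [RCLike 𝕜] [NormedAddCommGroup E] [NormedSpace 𝕜 E]
  [NormedAddCommGroup F] [NormedSpace 𝕜 F] {Q : E →L[𝕜] F} {J : F →ₗᵢ[𝕜] E}

/-- With `J` the inclusion of `X_i` and `Q` the projection `P_i`, this is `P_i T|_{X_i}`. -/
def compression (Q : E →L[𝕜] F) (J : F →ₗᵢ[𝕜] E) (T : E → E) : F → F :=
  fun y => Q (T (J y))

theorem LipschitzWith.compression {T : E → E} {K : ℝ≥0} (hT : LipschitzWith K T) :
    LipschitzWith (‖Q‖₊ * (K * 1)) (compression Q J T) :=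
  Q.lipschitz.comp (hT.comp J.lipschitz)

theorem IsLip0.compression {T : E → E} (hT : IsLip0 T) : IsLip0 (compression Q J T) := by
  obtain ⟨⟨K, hK⟩, hT0⟩ := hT
  exact ⟨⟨_, hK.compression⟩, by simp [_root_.compression, hT0]⟩

theorem nuL_compression_le (hQ : ‖Q‖ ≤ 1) (hQJ : ∀ y, Q (J y) = y) {T : E → E} {K : ℝ≥0}
    (hT : LipschitzWith K T) : nuL 𝕜 (compression Q J T) ≤ nuL 𝕜 T := by
  refine nuL_le (nuL_nonneg T) fun a b f hab hf => ?_
  have hQab : Q (J a - J b) = a - b := by rw [map_sub, hQJ, hQJ]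
  have hnorm : ‖J a - J b‖ = ‖a - b‖ := by rw [← map_sub, J.norm_map]
  have hext : f.comp Q ∈ Dset 𝕜 (J a - J b) :=
    comp_mem_Dset hQ (by rw [hQab, hnorm]) (by rwa [hQab])
  have := le_nuL hT (J.injective.ne hab) hext
  rwa [ContinuousLinearMap.comp_apply, map_sub, hnorm] at this

theorem norm_sub_two_mul_le_norm_apply (hQ : ‖Q‖ ≤ 1) (hQJ : ∀ y, Q (J y) = y) (u : E) (v : F) :
    ‖u‖ - 2 * ‖u - J v‖ ≤ ‖Q u‖ := by
  have hQ' : ‖Q u - v‖ ≤ ‖u - J v‖ := by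
    have : Q u - v = Q (u - J v) := by rw [map_sub, hQJ]
    rw [this]
    exact (Q.le_opNorm _).trans (mul_le_of_le_one_left (norm_nonneg _) hQ)
  have h₁ := norm_sub_norm_le u (J v)
  have h₂ := norm_sub_norm_le v (Q u)
  rw [J.norm_map] at h₁
  rw [norm_sub_rev] at h₂
  linarith

end Compression

theorem nL_le_nuL_div_of_compression {E F : Type*} [NormedAddCommGroup E] [NormedSpace ℝ E]
    [NormedAddCommGroup F] [NormedSpace ℝ F] {Q : E →L[ℝ] F} {J : F →ₗᵢ[ℝ] E}
    (hQ : ‖Q‖ ≤ 1) (hQJ : ∀ y, Q (J y) = y) {T : E → E} (hT : IsLip0 T) {a b v : F}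
    (hab : a ≠ b) {r : ℝ} (hr : 0 < r)
    (h : r * ‖J a - J b‖ ≤ ‖T (J a) - T (J b)‖ - 2 * ‖T (J a) - T (J b) - J v‖) :
    nL ℝ F ≤ nuL ℝ T / r := by
  have hS := hT.compression (Q := Q) (J := J)
  obtain ⟨⟨K, hK⟩, -⟩ := hT
  have hrS : r ≤ LipNorm (compression Q J T) := by
    refine le_trans ?_ (le_lipNorm hK.compression hab)
    have hnorm : ‖J a - J b‖ = ‖a - b‖ := by rw [← map_sub, J.norm_map]
    rw [le_div_iff₀ (norm_pos_iff.2 (sub_ne_zero.2 hab)), ← hnorm, compression, compression,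
      ← map_sub Q]
    linarith [norm_sub_two_mul_le_norm_apply hQ hQJ (T (J a) - T (J b)) v]
  calc nL ℝ F ≤ nuL ℝ (compression Q J T) / LipNorm (compression Q J T) :=
        nL_le_nuL_div_lipNorm hS (hr.trans_le hrS)
    _ ≤ nuL ℝ T / r := div_le_div₀ (nuL_nonneg T) (nuL_compression_le hQ hQJ hK) hr hrS

theorem le_of_forall_lt_one_le_div {a b : ℝ} (h : ∀ r ∈ Set.Ioo (0 : ℝ) 1, a ≤ b / r) : a ≤ b := by
  have hcont : ContinuousAt (fun r : ℝ => b / r) 1 := by fun_prop (disch := norm_num)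
  have hlim : Tendsto (fun r => b / r) (𝓝[<] 1) (𝓝 b) := by
    simpa using hcont.tendsto.mono_left nhdsWithin_le_nhds
  exact ge_of_tendsto hlim (Filter.mem_of_superset (Ioo_mem_nhdsLT zero_lt_one) h)

theorem eventually_nL_le_nuL_div {X : Type*} [NormedAddCommGroup X] [NormedSpace ℝ X]
    {I : Type*} [Preorder I] {Xi : I → Submodule ℝ X}
    (hmono : ∀ i j : I, i ≤ j → Xi i ≤ Xi j)
    (hproj : ∀ i, ∃ P : X →L[ℝ] X, ‖P‖ ≤ 1 ∧ (∀ x : X, P x ∈ Xi i) ∧ ∀ x ∈ Xi i, P x = x)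
    (hdense : Dense (⋃ i, (Xi i : Set X))) {T : X → X} (hT : IsLip0 T) (hT1 : LipNorm T = 1)
    {r : ℝ} (hr : r ∈ Set.Ioo (0 : ℝ) 1) :
    ∀ᶠ j in atTop, nL ℝ (Xi j) ≤ nuL ℝ T / r := by
  have eventually_mem {z : X} (hz : z ∈ ⋃ i, (Xi i : Set X)) : ∀ᶠ j in atTop, z ∈ Xi j := by
    obtain ⟨i, hi⟩ := Set.mem_iUnion.1 hz
    exact (eventually_ge_atTop i).mono fun j hij => hmono i j hij hi
  obtain ⟨x, hx, y, hy, hxy, hrxy⟩ := exists_lt_div_of_lt_lipNorm_of_dense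
    hT.continuous hdense hr.1.le (hT1 ▸ hr.2)
  have hd : 0 < ‖x - y‖ := norm_pos_iff.2 (sub_ne_zero.2 hxy)
  rw [lt_div_iff₀ hd] at hrxy
  obtain ⟨w, hw, hTw⟩ := hdense.exists_dist_lt (T x - T y)
    (ε := (‖T x - T y‖ - r * ‖x - y‖) / 2) (by linarith)
  filter_upwards [eventually_mem hx, eventually_mem hy, eventually_mem hw] with j hxj hyj hwj
  obtain ⟨P, hP1, hPX, hPfix⟩ := hproj j
  have hQ : ‖P.codRestrict (Xi j) hPX‖ ≤ 1 :=
    ContinuousLinearMap.opNorm_le_bound _ zero_le_one fun z => by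
      simpa using (P.le_opNorm z).trans (mul_le_of_le_one_left (norm_nonneg z) hP1)
  refine nL_le_nuL_div_of_compression (J := (Xi j).subtypeₗᵢ) (a := ⟨x, hxj⟩) (b := ⟨y, hyj⟩)
    (v := ⟨w, hwj⟩) hQ (fun z => Subtype.ext (hPfix z z.2)) hT
    (fun h => hxy (congrArg Subtype.val h)) hr.1 ?_
  rw [dist_eq_norm] at hTw
  change r * ‖x - y‖ ≤ ‖T x - T y‖ - 2 * ‖T x - T y - w‖
  linarith

theorem lipschitz_index_ge_limsup_of_one_complemented_general
    {X : Type*} [NormedAddCommGroup X] [NormedSpace ℝ X]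
    {I : Type*} [Nonempty I] [Preorder I] [IsDirected I (· ≤ ·)]
    (Xi : I → Submodule ℝ X)
    (hmono : ∀ i j : I, i ≤ j → Xi i ≤ Xi j)
    (hproj : ∀ i, ∃ P : X →L[ℝ] X, ‖P‖ = 1 ∧ (∀ x : X, P x ∈ Xi i) ∧ ∀ x ∈ Xi i, P x = x)
    (hdense : Dense (⋃ i, (Xi i : Set X))) :
    Filter.limsup (fun i => nL ℝ (Xi i)) Filter.atTop ≤ nL ℝ X := by
  rcases subsingleton_or_nontrivial X with hX | hX
  · simp only [nL_of_subsingleton, limsup_const, le_refl]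
  refine le_nL fun T hT hT1 => le_of_forall_lt_one_le_div fun r hr => ?_
  exact limsup_le_of_le (isCoboundedUnder_le_of_le atTop fun i => nL_nonneg)
    (eventually_nL_le_nuL_div hmono (fun i => (hproj i).imp fun _ hP => ⟨hP.1.le, hP.2⟩) hdense
      hT hT1 hr)

/-- If `(X_i)_{i ∈ I}` is an increasing family (over a directed index set)
of closed one-complemented subspaces of `X` whose union is dense in `X`, then
`n_L(X) ≥ limsup_i n_L(X_i)`. -/
theorem lipschitz_index_ge_limsup_of_one_complemented
    {X : Type*} [NormedAddCommGroup X] [NormedSpace ℝ X] [CompleteSpace X]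
    {I : Type*} [Nonempty I] [Preorder I] [IsDirected I (· ≤ ·)]
    (Xi : I → Submodule ℝ X)
    (hmono : ∀ i j : I, i ≤ j → Xi i ≤ Xi j)
    (hclosed : ∀ i, IsClosed (Xi i : Set X))
    (hproj : ∀ i, ∃ P : X →L[ℝ] X, ‖P‖ = 1 ∧ (∀ x : X, P x ∈ Xi i) ∧ ∀ x ∈ Xi i, P x = x)
    (hdense : Dense (⋃ i, (Xi i : Set X))) :
    Filter.limsup (fun i => nL ℝ (Xi i)) Filter.atTop ≤ nL ℝ X :=
  lipschitz_index_ge_limsup_of_one_complemented_general Xi hmono hproj hdense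

end
end
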